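/- arXiv:1507.00748 — 10 statements merged into one kernel-verified Lean document; each statement's English description precedes it below -/
import Mathlib

section
/- Let x = (x_S)_{S ∈ 𝒮^P, P ∈ 𝒫} be any family of nonnegative reals indexed by suffix chains, and let x̃ be its projection. Then x̃ satisfies the chain-structure constraints (D3): for every chain P ∈ 𝒫, every job j ∈ P, and every i ∈ {1,…,k−1}, ∑_{j' ∈ P : j' ⪯ j} x̃^{i+1}_{j'} ≤ ∑_{j' ∈ P : j' ⪯ j} x̃^{i}_{j'}. -/
/-- A suffix chain with `k` layers of a chain with `m` jobs.  The jobs of the chain are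
`Fin m` (ordered by the precedence order `⪯`), and the chain is extended by the dummy
element `⊥`, encoded as the last element of `Fin (m+1)`.  A suffix is encoded by its
starting point `a : Fin (m+1)` (so `a = ⊥` encodes the empty suffix), namely
`suffix a = {j : Fin m | a ≤ j.castSucc}`, and `suffix a ⊇ suffix b ↔ a ≤ b`.
A suffix chain `S₁ ⊇ S₂ ⊇ … ⊇ S_k` is therefore a monotone map `Fin k → Fin (m+1)`
of starting points. -/
def SuffixChain (k m : ℕ) : Type :=
  {S : Fin k → Fin (m + 1) // ∀ i i' : Fin k, i ≤ i' → S i ≤ S i'}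

noncomputable instance (k m : ℕ) : Fintype (SuffixChain k m) :=
  Subtype.fintype _

/-- The projection `x̃` of a family `x` indexed by suffix chains:
`x̃ⁱⱼ = ∑_{S ∈ 𝒮 : Sᵢ = suffix j} x_S`, where `j` ranges over `P ∪ {⊥}`,
encoded as `Fin (m+1)`. -/
noncomputable def proj {k m : ℕ} (x : SuffixChain k m → ℝ) (i : Fin k) (j : Fin (m + 1)) : ℝ :=
  ∑ S : SuffixChain k m, if S.1 i = j then x S else 0

section SuffixChain

variable {k m : ℕ} (x : SuffixChain k m → ℝ)

theorem sum_Iic_proj_castSucc (i : Fin k) (j : Fin m) :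
    ∑ j' ∈ Finset.Iic j, proj x i j'.castSucc =
      ∑ S : SuffixChain k m, if S.1 i ≤ j.castSucc then x S else 0 := by
  unfold proj
  rw [Finset.sum_comm]
  refine Finset.sum_congr rfl fun S _ => ?_
  have := Finset.sum_map (Finset.Iic j) Fin.castSuccEmb fun j' => if S.1 i = j' then x S else 0
  simp only [Fin.map_castSuccEmb_Iic, Finset.sum_ite_eq, Finset.mem_Iic] at this
  exact this.symm

/-- The left side counts the suffix chains whose `i'`-th layer starts at or before `j`; since
the layers shrink, their `i`-th layer does too. -/
theorem sum_Iic_proj_antitone (hx : ∀ S, 0 ≤ x S) {i i' : Fin k} (hii' : i ≤ i') (j : Fin m) :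
    ∑ j' ∈ Finset.Iic j, proj x i' j'.castSucc ≤ ∑ j' ∈ Finset.Iic j, proj x i j'.castSucc := by
  rw [sum_Iic_proj_castSucc, sum_Iic_proj_castSucc]
  refine Finset.sum_le_sum fun S _ => ?_
  by_cases h : S.1 i' ≤ j.castSucc
  · rw [if_pos h, if_pos ((S.2 i i' hii').trans h)]
  · rw [if_neg h]
    split_ifs
    exacts [hx S, le_rfl]

end SuffixChain

/-- For any nonnegative family `x = (x_S)_{S ∈ 𝒮^P, P ∈ 𝒫}` indexed by
suffix chains, its projection `x̃` satisfies the chain-structure constraints (D3):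
for every chain `P`, every job `j ∈ P` and every `i ∈ {1,…,k-1}`,
`∑_{j' ⪯ j} x̃^{i+1}_{j'} ≤ ∑_{j' ⪯ j} x̃^{i}_{j'}`.
Here the `q` chains are indexed by `Fin q`, chain `P` having jobs `Fin (m P)`. -/
theorem stmt0 (q k : ℕ) (m : Fin q → ℕ)
    (x : (P : Fin q) → SuffixChain k (m P) → ℝ)
    (hx : ∀ (P : Fin q) (S : SuffixChain k (m P)), 0 ≤ x P S) :
    ∀ (P : Fin q) (j : Fin (m P)) (i : ℕ) (hi : i + 1 < k),
      ∑ j' ∈ Finset.Iic j, proj (x P) ⟨i + 1, hi⟩ j'.castSucc ≤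
        ∑ j' ∈ Finset.Iic j, proj (x P) ⟨i, Nat.lt_of_succ_lt hi⟩ j'.castSucc := by
  intro P j i hi
  exact sum_Iic_proj_antitone (x P) (hx P) (Fin.mk_le_mk.mpr i.le_succ) j
end

section
/- Let x = (x_S)_{S ∈ 𝒮^P, P ∈ 𝒫} be any family of nonnegative reals indexed by suffix chains, and let x̃ be its projection. Define Ũ_j = ∑_{j' ∈ P : j' ⪯ j} x̃^{i(j)}_{j'} for each job j on chain P, and for a suffix chain S ∈ 𝒮^P define w_S = ∑_{j ∈ P : j ∈ S_{i(j)}} w_j. Then ∑_{j ∈ [n]} w_j Ũ_j = ∑_{P ∈ 𝒫} ∑_{S ∈ 𝒮^P} w_S x_S; that is, the objective value of x̃ in the compact LP (P2) equals the objective value of x in the configuration LP (P). -/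
open Finset

theorem sum_Iic_castSucc_proj {k m : ℕ} (x : SuffixChain k m → ℝ) (i : Fin k) (j : Fin m) :
    ∑ j' ∈ Iic j, proj x i j'.castSucc = ∑ S, if S.1 i ≤ j.castSucc then x S else 0 := by
  calc ∑ j' ∈ Iic j, proj x i j'.castSucc = ∑ b ∈ Iic j.castSucc, proj x i b := by
        rw [← Fin.map_castSuccEmb_Iic, sum_map]
        rfl
    _ = ∑ S, ∑ b ∈ Iic j.castSucc, if S.1 i = b then x S else 0 := sum_comm
    _ = _ := sum_congr rfl fun S _ =>
        (sum_ite_eq _ (S.1 i) fun _ => x S).trans (if_congr mem_Iic rfl rfl)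

/-- Chain `P` has jobs `Fin (m P)`, job `j` of it has penalty `w P j` and deadline index
`iop P j = i(j)`; `j ∈ S_{i(j)}` is `S.1 (iop P j) ≤ j.castSucc`. -/
theorem stmt3_general (q k : ℕ) (m : Fin q → ℕ)
    (w : (P : Fin q) → Fin (m P) → ℕ)
    (iop : (P : Fin q) → Fin (m P) → Fin k)
    (x : (P : Fin q) → SuffixChain k (m P) → ℝ) :
    ∑ P : Fin q, ∑ j : Fin (m P),
        (w P j : ℝ) * (∑ j' ∈ Finset.Iic j, proj (x P) (iop P j) j'.castSucc)
      = ∑ P : Fin q, ∑ S : SuffixChain k (m P),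
          (∑ j ∈ Finset.univ.filter (fun j : Fin (m P) => S.1 (iop P j) ≤ j.castSucc),
            (w P j : ℝ)) * x P S := by
  refine sum_congr rfl fun P _ => ?_
  simp only [sum_Iic_castSucc_proj, mul_sum, mul_ite, mul_zero]
  rw [sum_comm]
  refine sum_congr rfl fun S _ => ?_
  rw [sum_mul, sum_filter]

/-- Let `x ≥ 0` be indexed by suffix chains, let `x̃` be its projection,
let `Ũ_j = ∑_{j' ⪯ j} x̃^{i(j)}_{j'}`, and for `S ∈ 𝒮^P` let
`w_S = ∑_{j ∈ P : j ∈ S_{i(j)}} w_j`.  Then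
`∑_{j ∈ [n]} w_j Ũ_j = ∑_{P ∈ 𝒫} ∑_{S ∈ 𝒮^P} w_S x_S`: the objective value of `x̃` in
the compact LP (P2) equals the objective value of `x` in the configuration LP (P).
Here chain `P ∈ Fin q` has jobs `Fin (m P)`, `w P j` is the penalty of job `j` of
chain `P`, and `iop P j ∈ Fin k` is the index `i(j)` of its deadline;
`j ∈ S_{i(j)}` means `S.1 (iop P j) ≤ j.castSucc`. -/
theorem stmt3 (q k : ℕ) (m : Fin q → ℕ)
    (w : (P : Fin q) → Fin (m P) → ℕ)
    (iop : (P : Fin q) → Fin (m P) → Fin k)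
    (x : (P : Fin q) → SuffixChain k (m P) → ℝ)
    (hx : ∀ (P : Fin q) (S : SuffixChain k (m P)), 0 ≤ x P S) :
    ∑ P : Fin q, ∑ j : Fin (m P),
        (w P j : ℝ) * (∑ j' ∈ Finset.Iic j, proj (x P) (iop P j) j'.castSucc)
      = ∑ P : Fin q, ∑ S : SuffixChain k (m P),
          (∑ j ∈ Finset.univ.filter (fun j : Fin (m P) => S.1 (iop P j) ≤ j.castSucc),
            (w P j : ℝ)) * x P S :=
  stmt3_general q k m w iop x
end

section
/- Let x̃ = (x̃^i_j) be nonnegative reals (for P ∈ 𝒫, j ∈ P ∪ {⊥_P}, i ∈ [k]) satisfying (D1): ∑_{j ∈ P ∪ {⊥_P}} x̃^i_j ≤ 1 for all P, i, and (D3): ∑_{j'⪯j} x̃^{i+1}_{j'} ≤ ∑_{j'⪯j} x̃^{i}_{j'} for all P, j ∈ P, i ∈ [k−1]. Then there exists a family x = (x_S)_{S∈𝒮^P, P∈𝒫} of nonnegative reals such that (a) for each chain P the support {S ∈ 𝒮^P : x_S > 0} is cross-free (totally ordered by the relation S ⪯ S' iff S_i ⊇ S'_i for all i), and (b) x̃ is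 the projection of x, i.e. x̃^i_j = ∑_{S ∈ 𝒮^P : S_i = suffix(j)} x_S for all P, j, i. -/
namespace Stmt4Aux

variable {k m : ℕ}

/-- extended CDF: mass 1 dumped at the dummy last element. -/
noncomputable def g (xt : Fin k → Fin (m + 1) → ℝ) (i : Fin k) (t : ℕ) : ℝ :=
  if m + 1 ≤ t then 1 else ∑ j : Fin (m + 1), if (j : ℕ) < t then xt i j else 0

variable {xt : Fin k → Fin (m + 1) → ℝ}

lemma g_zero (i : Fin k) : g xt i 0 = 0 := by
  simp [g]

lemma g_top (i : Fin k) {t : ℕ} (h : m + 1 ≤ t) : g xt i t = 1 := by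
  simp [g, h]

lemma g_mono (hnn : ∀ i j, 0 ≤ xt i j) (hD1 : ∀ i, ∑ j : Fin (m+1), xt i j ≤ 1)
    (i : Fin k) {t t' : ℕ} (h : t ≤ t') : g xt i t ≤ g xt i t' := by
  unfold g
  by_cases h1 : m + 1 ≤ t
  · rw [if_pos h1, if_pos (le_trans h1 h)]
  · rw [if_neg h1]
    by_cases h2 : m + 1 ≤ t'
    · rw [if_pos h2]
      calc ∑ j : Fin (m+1), (if (j:ℕ) < t then xt i j else 0)
          ≤ ∑ j : Fin (m+1), xt i j := by
            apply Finset.sum_le_sum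
            intro j _
            split
            · exact le_refl _
            · exact hnn i j
        _ ≤ 1 := hD1 i
    · rw [if_neg h2]
      apply Finset.sum_le_sum
      intro j _
      split
      · rw [if_pos (by omega)]
      · split
        · exact hnn i j
        · exact le_refl _

lemma g_nonneg (hnn : ∀ i j, 0 ≤ xt i j) (hD1 : ∀ i, ∑ j : Fin (m+1), xt i j ≤ 1)
    (i : Fin k) (t : ℕ) : 0 ≤ g xt i t := by
  rw [← g_zero (xt := xt) i]; exact g_mono hnn hD1 i (Nat.zero_le t)

lemma g_le_one (hnn : ∀ i j, 0 ≤ xt i j) (hD1 : ∀ i, ∑ j : Fin (m+1), xt i j ≤ 1)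
    (i : Fin k) (t : ℕ) : g xt i t ≤ 1 := by
  by_cases h : m + 1 ≤ t
  · rw [g_top i h]
  · rw [← g_top (xt := xt) i (le_refl (m+1))]
    exact g_mono hnn hD1 i (by omega)

lemma g_succ_sub (i : Fin k) {t : ℕ} (ht : t < m) (ht' : t < m + 1) :
    g xt i (t + 1) - g xt i t = xt i ⟨t, ht'⟩ := by
  unfold g
  rw [if_neg (by omega), if_neg (by omega), ← Finset.sum_sub_distrib]
  rw [Finset.sum_eq_single ⟨t, ht'⟩]
  · rw [if_pos (by simp), if_neg (by simp), sub_zero]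
  · intro j _ hj
    have : (j : ℕ) ≠ t := fun h => hj (Fin.ext h)
    by_cases h2 : (j : ℕ) < t
    · rw [if_pos (by omega), if_pos h2, sub_self]
    · rw [if_neg (by omega), if_neg h2, sub_self]
  · intro h
    exact absurd (Finset.mem_univ _) h

/-- conversion of the filtered sum to the `Iic` form of (D3). -/
lemma sum_if_eq_Iic (f : Fin (m + 1) → ℝ) {t : ℕ} (h1 : 0 < t) (h2 : t ≤ m) :
    ∑ j : Fin (m + 1), (if (j : ℕ) < t then f j else 0)
      = ∑ j' ∈ Finset.Iic (⟨t - 1, by omega⟩ : Fin m), f j'.castSucc := by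
  rw [← Finset.sum_filter]
  refine Finset.sum_nbij' (fun j => (⟨min (j : ℕ) (m-1), by omega⟩ : Fin m))
    (fun j' => j'.castSucc) ?_ ?_ ?_ ?_ ?_
  · intro a ha
    simp only [Finset.mem_filter, Finset.mem_univ, true_and] at ha
    simp only [Finset.mem_Iic, Fin.le_def]
    omega
  · intro a ha
    simp only [Finset.mem_Iic, Fin.le_def] at ha
    simp only [Finset.mem_filter, Finset.mem_univ, true_and, Fin.coe_castSucc]
    omega
  · intro a ha
    simp only [Finset.mem_filter, Finset.mem_univ, true_and] at ha
    ext
    simp only [Fin.coe_castSucc]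
    omega
  · intro a ha
    simp only [Finset.mem_Iic, Fin.le_def] at ha
    ext
    simp only [Fin.coe_castSucc]
    omega
  · intro a ha
    simp only [Finset.mem_filter, Finset.mem_univ, true_and] at ha
    congr 1
    ext
    simp only [Fin.coe_castSucc]
    omega

lemma g_anti_succ
    (hD3 : ∀ (j : Fin m) (i : ℕ) (hi : i + 1 < k),
      ∑ j' ∈ Finset.Iic j, xt ⟨i + 1, hi⟩ j'.castSucc ≤
        ∑ j' ∈ Finset.Iic j, xt ⟨i, Nat.lt_of_succ_lt hi⟩ j'.castSucc)
    (i : ℕ) (hi : i + 1 < k) (t : ℕ) :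
    g xt ⟨i + 1, hi⟩ t ≤ g xt ⟨i, Nat.lt_of_succ_lt hi⟩ t := by
  by_cases h1 : m + 1 ≤ t
  · rw [g_top _ h1, g_top _ h1]
  · by_cases h0 : t = 0
    · subst h0; rw [g_zero, g_zero]
    · have ht : 0 < t := Nat.pos_of_ne_zero h0
      have htm : t ≤ m := by omega
      unfold g
      rw [if_neg h1, if_neg h1, sum_if_eq_Iic _ ht htm, sum_if_eq_Iic _ ht htm]
      exact hD3 ⟨t - 1, by omega⟩ i hi

lemma g_anti
    (hD3 : ∀ (j : Fin m) (i : ℕ) (hi : i + 1 < k),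
      ∑ j' ∈ Finset.Iic j, xt ⟨i + 1, hi⟩ j'.castSucc ≤
        ∑ j' ∈ Finset.Iic j, xt ⟨i, Nat.lt_of_succ_lt hi⟩ j'.castSucc)
    (a b : Fin k) (hab : a ≤ b) (t : ℕ) : g xt b t ≤ g xt a t := by
  obtain ⟨b, hb⟩ := b
  induction b with
  | zero =>
    have : a = ⟨0, hb⟩ := le_antisymm hab (Fin.mk_le_of_le_val (Nat.zero_le _))
    rw [this]
  | succ n ih =>
    by_cases h : (a : ℕ) ≤ n
    · calc g xt ⟨n+1, hb⟩ t ≤ g xt ⟨n, Nat.lt_of_succ_lt hb⟩ t := g_anti_succ hD3 n hb t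
        _ ≤ g xt a t := ih (Nat.lt_of_succ_lt hb) h
    · have : a = ⟨n+1, hb⟩ := by
        apply Fin.ext
        have := Fin.le_def.mp hab
        simp at this ⊢
        omega
      rw [this]

/-- the quantile function. -/
noncomputable def Q (xt : Fin k → Fin (m + 1) → ℝ) (u : ℝ) (i : Fin k) : Fin (m + 1) :=
  if h : (Finset.univ.filter (fun j : Fin (m + 1) => u ≤ g xt i ((j : ℕ) + 1))).Nonempty
  then Finset.min' _ h else Fin.last m

lemma Q_filter_nonempty {u : ℝ} (hu : u ≤ 1) (i : Fin k) :
    (Finset.univ.filter (fun j : Fin (m + 1) => u ≤ g xt i ((j : ℕ) + 1))).Nonempty := by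
  refine ⟨Fin.last m, ?_⟩
  simp only [Finset.mem_filter, Finset.mem_univ, true_and, Fin.val_last]
  rw [g_top i (le_refl _)]
  exact hu

lemma Q_le_self {u : ℝ} (hu : u ≤ 1) (i : Fin k) :
    u ≤ g xt i ((Q xt u i : ℕ) + 1) := by
  have h := Q_filter_nonempty (xt := xt) hu i
  have := Finset.min'_mem _ h
  simp only [Finset.mem_filter, Finset.mem_univ, true_and] at this
  unfold Q
  rw [dif_pos h]
  exact this

lemma Q_min {u : ℝ} (hu : u ≤ 1) (i : Fin k) {j : Fin (m + 1)}
    (hj : u ≤ g xt i ((j : ℕ) + 1)) : Q xt u i ≤ j := by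
  have h := Q_filter_nonempty (xt := xt) hu i
  unfold Q
  rw [dif_pos h]
  exact Finset.min'_le _ _ (by simp only [Finset.mem_filter, Finset.mem_univ, true_and]; exact hj)

lemma g_Q_lt (hnn : ∀ i j, 0 ≤ xt i j) (hD1 : ∀ i, ∑ j : Fin (m+1), xt i j ≤ 1)
    {u : ℝ} (hu0 : 0 < u) (hu1 : u ≤ 1) (i : Fin k) :
    g xt i (Q xt u i) < u := by
  by_cases h0 : (Q xt u i : ℕ) = 0
  · rw [h0, g_zero]; exact hu0
  · have hv : (Q xt u i : ℕ) - 1 < m + 1 := by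
      have := (Q xt u i).2; omega
    by_contra hle
    push_neg at hle
    have : Q xt u i ≤ ⟨(Q xt u i : ℕ) - 1, hv⟩ := by
      apply Q_min hu1
      have : ((⟨(Q xt u i : ℕ) - 1, hv⟩ : Fin (m+1)) : ℕ) + 1 = (Q xt u i : ℕ) := by
        simp; omega
      rw [this]
      exact hle
    rw [Fin.le_def] at this
    simp at this
    omega

lemma Q_mono_layer
    (hD3 : ∀ (j : Fin m) (i : ℕ) (hi : i + 1 < k),
      ∑ j' ∈ Finset.Iic j, xt ⟨i + 1, hi⟩ j'.castSucc ≤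
        ∑ j' ∈ Finset.Iic j, xt ⟨i, Nat.lt_of_succ_lt hi⟩ j'.castSucc)
    {u : ℝ} (hu1 : u ≤ 1) (a b : Fin k) (hab : a ≤ b) : Q xt u a ≤ Q xt u b := by
  apply Q_min hu1
  calc u ≤ g xt b ((Q xt u b : ℕ) + 1) := Q_le_self hu1 b
    _ ≤ g xt a ((Q xt u b : ℕ) + 1) := g_anti hD3 a b hab _

lemma Q_unique (hnn : ∀ i j, 0 ≤ xt i j) (hD1 : ∀ i, ∑ j : Fin (m+1), xt i j ≤ 1)
    {u : ℝ} {i : Fin k} {j : Fin (m + 1)}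
    (h1 : g xt i (j : ℕ) < u) (h2 : u ≤ g xt i ((j : ℕ) + 1)) : Q xt u i = j := by
  have hu1 : u ≤ 1 := le_trans h2 (g_le_one hnn hD1 i _)
  refine le_antisymm (Q_min hu1 i h2) ?_
  rw [Fin.le_def]
  by_contra hlt
  push_neg at hlt
  have : u ≤ g xt i (j : ℕ) :=
    le_trans (Q_le_self hu1 i) (g_mono hnn hD1 i (by omega))
  linarith

/-- the interval of the uniform random variable mapped to the suffix chain `S`. -/
def A (xt : Fin k → Fin (m + 1) → ℝ) (S : SuffixChain k m) : Set ℝ :=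
  Set.Ioc 0 1 ∩ ⋂ i : Fin k, Set.Ioc (g xt i ((S.1 i : ℕ))) (g xt i ((S.1 i : ℕ) + 1))

lemma mem_A {S : SuffixChain k m} {u : ℝ} :
    u ∈ A xt S ↔ (0 < u ∧ u ≤ 1) ∧ ∀ i : Fin k,
      g xt i ((S.1 i : ℕ)) < u ∧ u ≤ g xt i ((S.1 i : ℕ) + 1) := by
  simp [A, Set.mem_iInter, Set.mem_Ioc]

lemma measurableSet_A (S : SuffixChain k m) : MeasurableSet (A xt S) :=
  measurableSet_Ioc.inter (MeasurableSet.iInter fun _ => measurableSet_Ioc)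

lemma A_eq_of_mem (hnn : ∀ i j, 0 ≤ xt i j) (hD1 : ∀ i, ∑ j : Fin (m+1), xt i j ≤ 1)
    {S S' : SuffixChain k m} {u : ℝ} (h : u ∈ A xt S) (h' : u ∈ A xt S') : S = S' := by
  rw [mem_A] at h h'
  apply Subtype.ext
  funext i
  rw [← Q_unique hnn hD1 (h.2 i).1 (h.2 i).2, ← Q_unique hnn hD1 (h'.2 i).1 (h'.2 i).2]

lemma biUnion_A (hnn : ∀ i j, 0 ≤ xt i j) (hD1 : ∀ i, ∑ j : Fin (m+1), xt i j ≤ 1)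
    (hD3 : ∀ (j : Fin m) (i : ℕ) (hi : i + 1 < k),
      ∑ j' ∈ Finset.Iic j, xt ⟨i + 1, hi⟩ j'.castSucc ≤
        ∑ j' ∈ Finset.Iic j, xt ⟨i, Nat.lt_of_succ_lt hi⟩ j'.castSucc)
    (i : Fin k) (j : Fin (m + 1)) :
    ⋃ S ∈ Finset.univ.filter (fun S : SuffixChain k m => S.1 i = j), A xt S
      = Set.Ioc (g xt i (j : ℕ)) (g xt i ((j : ℕ) + 1)) := by
  ext u
  simp only [Set.mem_iUnion, Finset.mem_filter, Finset.mem_univ, true_and, exists_prop,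
    Set.mem_Ioc]
  constructor
  · rintro ⟨S, hSij, hu⟩
    rw [mem_A] at hu
    rw [← hSij]
    exact hu.2 i
  · rintro ⟨h1, h2⟩
    have hu0 : 0 < u := lt_of_le_of_lt (g_nonneg hnn hD1 i _) h1
    have hu1 : u ≤ 1 := le_trans h2 (g_le_one hnn hD1 i _)
    refine ⟨⟨Q xt u, fun a b hab => Q_mono_layer hD3 hu1 a b hab⟩, ?_, ?_⟩
    · exact Q_unique hnn hD1 h1 h2
    · refine mem_A.mpr ?_
      exact ⟨⟨hu0, hu1⟩, fun i' => ⟨g_Q_lt hnn hD1 hu0 hu1 i', Q_le_self hu1 i'⟩⟩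

open MeasureTheory in
lemma chain_main (hnn : ∀ i j, 0 ≤ xt i j) (hD1 : ∀ i, ∑ j : Fin (m+1), xt i j ≤ 1)
    (hD3 : ∀ (j : Fin m) (i : ℕ) (hi : i + 1 < k),
      ∑ j' ∈ Finset.Iic j, xt ⟨i + 1, hi⟩ j'.castSucc ≤
        ∑ j' ∈ Finset.Iic j, xt ⟨i, Nat.lt_of_succ_lt hi⟩ j'.castSucc) :
    ∃ x : SuffixChain k m → ℝ,
      (∀ S, 0 ≤ x S) ∧
      (∀ S S', 0 < x S → 0 < x S' →
        (∀ i : Fin k, S.1 i ≤ S'.1 i) ∨ (∀ i : Fin k, S'.1 i ≤ S.1 i)) ∧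
      (∀ (i : Fin k) (j : Fin m),
        xt i j.castSucc = ∑ S : SuffixChain k m, if S.1 i = j.castSucc then x S else 0) := by
  refine ⟨fun S => (volume (A xt S)).toReal, fun S => ENNReal.toReal_nonneg, ?_, ?_⟩
  · -- cross-free
    intro S S' hS hS'
    have hne : (A xt S).Nonempty := by
      apply MeasureTheory.nonempty_of_measure_ne_zero (μ := volume)
      intro h0
      apply lt_irrefl (0:ℝ)
      simpa [h0] using hS
    have hne' : (A xt S').Nonempty := by
      apply MeasureTheory.nonempty_of_measure_ne_zero (μ := volume)
      intro h0
      apply lt_irrefl (0:ℝ)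
      simpa [h0] using hS'
    obtain ⟨u, hu⟩ := hne
    obtain ⟨u', hu'⟩ := hne'
    rw [mem_A] at hu hu'
    rcases le_total u u' with huu | huu
    · left
      intro i
      by_contra hlt
      push_neg at hlt
      rw [Fin.lt_def] at hlt
      have h1 : u' ≤ g xt i ((S'.1 i : ℕ) + 1) := (hu'.2 i).2
      have h2 : g xt i ((S.1 i : ℕ)) < u := (hu.2 i).1
      have h3 : g xt i ((S'.1 i : ℕ) + 1) ≤ g xt i ((S.1 i : ℕ)) :=
        g_mono hnn hD1 i (by omega)
      linarith
    · right
      intro i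
      by_contra hlt
      push_neg at hlt
      rw [Fin.lt_def] at hlt
      have h1 : u ≤ g xt i ((S.1 i : ℕ) + 1) := (hu.2 i).2
      have h2 : g xt i ((S'.1 i : ℕ)) < u' := (hu'.2 i).1
      have h3 : g xt i ((S.1 i : ℕ) + 1) ≤ g xt i ((S'.1 i : ℕ)) :=
        g_mono hnn hD1 i (by omega)
      linarith
  · -- projection
    intro i j
    rw [← Finset.sum_filter]
    have hfin : ∀ S ∈ Finset.univ.filter (fun S : SuffixChain k m => S.1 i = j.castSucc),
        volume (A xt S) ≠ ⊤ := by
      intro S _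
      have : volume (A xt S) ≤ volume (Set.Ioc (0:ℝ) 1) :=
        measure_mono (Set.inter_subset_left)
      rw [Real.volume_Ioc] at this
      exact ne_top_of_le_ne_top (by simp) this
    rw [← ENNReal.toReal_sum hfin]
    have hdisj : (↑(Finset.univ.filter (fun S : SuffixChain k m => S.1 i = j.castSucc)) :
        Set (SuffixChain k m)).PairwiseDisjoint (A xt) := by
      intro S _ S' _ hne
      exact Set.disjoint_left.mpr fun u hu hu' => hne (A_eq_of_mem hnn hD1 hu hu')
    rw [← measure_biUnion_finset hdisj (fun S _ => measurableSet_A S)]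
    rw [biUnion_A hnn hD1 hD3 i j.castSucc]
    rw [Real.volume_Ioc, ENNReal.toReal_ofReal (by
      have := g_mono (xt := xt) hnn hD1 i (t := (j.castSucc : ℕ)) (t' := (j.castSucc : ℕ) + 1) (by omega)
      linarith)]
    have hc : ((j.castSucc : ℕ)) = (j : ℕ) := rfl
    rw [hc]
    rw [g_succ_sub i j.2 (by omega)]
    congr 1

end Stmt4Aux

/-- Let `x̃ = (x̃ⁱⱼ) ≥ 0` (for `P ∈ 𝒫`, `j ∈ P ∪ {⊥_P}`, `i ∈ [k]`)
satisfy (D1): `∑_{j ∈ P ∪ {⊥_P}} x̃ⁱⱼ ≤ 1` for all `P, i`, and (D3):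
`∑_{j' ⪯ j} x̃^{i+1}_{j'} ≤ ∑_{j' ⪯ j} x̃ⁱ_{j'}` for all `P`, `j ∈ P`, `i ∈ [k-1]`.
Then there is a nonnegative family `x = (x_S)_{S ∈ 𝒮^P, P ∈ 𝒫}` such that
(a) for each chain `P` the support `{S : x_S > 0}` is cross-free (totally ordered by
`S ⪯ S' ↔ ∀ i, S_i ⊇ S'_i`, i.e. starting points `S.1 i ≤ S'.1 i` for all `i`), and
(b) `x̃` is the projection of `x`: `x̃ⁱⱼ = ∑_{S ∈ 𝒮^P : S_i = suffix(j)} x_S` for every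
chain `P`, job `j ∈ P` and layer `i`. -/
theorem stmt4 (q k : ℕ) (m : Fin q → ℕ)
    (xt : (P : Fin q) → Fin k → Fin (m P + 1) → ℝ)
    (hnn : ∀ (P : Fin q) (i : Fin k) (j : Fin (m P + 1)), 0 ≤ xt P i j)
    (hD1 : ∀ (P : Fin q) (i : Fin k), ∑ j : Fin (m P + 1), xt P i j ≤ 1)
    (hD3 : ∀ (P : Fin q) (j : Fin (m P)) (i : ℕ) (hi : i + 1 < k),
      ∑ j' ∈ Finset.Iic j, xt P ⟨i + 1, hi⟩ j'.castSucc ≤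
        ∑ j' ∈ Finset.Iic j, xt P ⟨i, Nat.lt_of_succ_lt hi⟩ j'.castSucc) :
    ∃ x : (P : Fin q) → SuffixChain k (m P) → ℝ,
      (∀ (P : Fin q) (S : SuffixChain k (m P)), 0 ≤ x P S) ∧
      (∀ (P : Fin q) (S S' : SuffixChain k (m P)), 0 < x P S → 0 < x P S' →
        (∀ i : Fin k, S.1 i ≤ S'.1 i) ∨ (∀ i : Fin k, S'.1 i ≤ S.1 i)) ∧
      (∀ (P : Fin q) (i : Fin k) (j : Fin (m P)),
        xt P i j.castSucc =
          ∑ S : SuffixChain k (m P), if S.1 i = j.castSucc then x P S else 0) := by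
  choose x h1 h2 h3 using fun P => Stmt4Aux.chain_main (hnn P) (hD1 P) (hD3 P)
  exact ⟨x, h1, h2, h3⟩
end

section
/- (Bhatia–Davis inequality.) Let X be a real random variable and let m ≤ M be reals such that m ≤ X ≤ M almost surely. Then the variance of X satisfies Var(X) ≤ (M − E[X]) · (E[X] − m). -/
open MeasureTheory ProbabilityTheory

theorem stmt7_general {Ω : Type*} [MeasureSpace Ω] [IsProbabilityMeasure (ℙ : Measure Ω)]
    (X : Ω → ℝ) (hX : MemLp X 2 ℙ) (m M : ℝ)
    (hm : ∀ᵐ ω ∂ℙ, m ≤ X ω) (hM : ∀ᵐ ω ∂ℙ, X ω ≤ M) :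
    variance X ℙ ≤ (M - ∫ ω, X ω ∂ℙ) * ((∫ ω, X ω ∂ℙ) - m) :=
  variance_le_sub_mul_sub (hm.and hM) hX.aestronglyMeasurable.aemeasurable

/-- **Bhatia–Davis inequality.** Let `X` be a real random variable on a
probability space with finite second moment, and let `m ≤ M` be reals such that
`m ≤ X ≤ M` almost surely.  Then `Var(X) ≤ (M − E[X]) · (E[X] − m)`. -/
theorem stmt7 {Ω : Type*} [MeasureSpace Ω] [IsProbabilityMeasure (ℙ : Measure Ω)]
    (X : Ω → ℝ) (hX : MemLp X 2 ℙ) (m M : ℝ) (hmM : m ≤ M)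
    (hm : ∀ᵐ ω ∂ℙ, m ≤ X ω) (hM : ∀ᵐ ω ∂ℙ, X ω ≤ M) :
    variance X ℙ ≤ (M - ∫ ω, X ω ∂ℙ) * ((∫ ω, X ω ∂ℙ) - m) :=
  stmt7_general X hX m M hm hM
end

section
/- Let X_1, …, X_n be mutually independent nonnegative real random variables, each satisfying X_i ≤ M almost surely for a fixed real M > 0. Let X = X_1 + ⋯ + X_n and μ = E[X], and suppose μ ≥ M. Then Pr[X ≤ M] ≤ exp( −(3/4) · (μ/M) · (1 − M/μ)² ). -/
/-!
Normalise to `Y i = X i / M ∈ [0, 1]`, whose sum `S` has mean `r = μ / M ≥ 1`; the claim becomes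
`Pr[S ≤ 1] ≤ exp (-(3/4) (r - 1)² / r)`.

For `r ≤ 7/4`, Cantelli's inequality with `Var S = ∑ Var (Y i) ≤ ∑ E[Y i] = r` gives
`Pr[S ≤ 1] ≤ r / (r + (r - 1)²)`, which is small enough as long as `3 (r - 1)² ≤ r`.

For `r ≥ 7/4`, bound the indicator of `{S ≤ 1}` by `(2 - S)⁺`. As `s ↦ (c - s)⁺` is convex, on
`[u, u + 1]` it lies below its chord, so adding one independent `Y i ∈ [0, 1]` to the sum costs at
most what adding a Bernoulli variable of the same mean would. Induction over the summands then
gives `E[(1 - S)⁺] ≤ e^{-r}` and `E[(2 - S)⁺] ≤ (2 + r) e^{-r}`, and `(2 + r) e^{-r}` is below the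
target bound for `r ≥ 7/4`.
-/

open MeasureTheory ProbabilityTheory Real Set

lemma div_add_sub_one_sq_le_exp {r : ℝ} (h1 : 1 ≤ r) (h2 : r ≤ 7 / 4) :
    r / (r + (r - 1) ^ 2) ≤ exp (-(3 / 4) * r * (1 - r⁻¹) ^ 2) := by
  have hr : 0 < r := by linarith
  set u := (r - 1) ^ 2 / r with hu_def
  have hu0 : 0 ≤ u := by positivity
  have hu3 : u ≤ 1 / 3 := by rw [hu_def, div_le_iff₀ hr]; nlinarith
  have hlhs : r / (r + (r - 1) ^ 2) = 1 / (1 + u) := by rw [hu_def]; field_simp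
  have hrhs : -(3 / 4) * r * (1 - r⁻¹) ^ 2 = -(3 / 4 * u) := by rw [hu_def]; field_simp
  calc r / (r + (r - 1) ^ 2) ≤ 1 - 3 / 4 * u := by
        rw [hlhs, div_le_iff₀ (by positivity)]; nlinarith
    _ ≤ exp (-(3 / 4) * r * (1 - r⁻¹) ^ 2) := hrhs ▸ one_sub_le_exp_neg _

lemma two_add_mul_exp_neg_le {r : ℝ} (hr : 7 / 4 ≤ r) :
    (2 + r) * exp (-r) ≤ exp (-(3 / 4) * r * (1 - r⁻¹) ^ 2) := by
  have hr0 : 0 < r := by linarith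
  set w : ℝ := r / 4 + 3 / 2 - 3 / (4 * r) with hw_def
  have hw : r / 4 + 15 / 14 ≤ w := by
    have : 3 / (4 * r) ≤ 3 / 7 := by
      rw [div_le_div_iff₀ (by linarith) (by norm_num)]; linarith
    linarith
  have hexp := Real.sum_le_exp_of_nonneg (by linarith : 0 ≤ w) 4
  norm_num [Finset.sum_range_succ, Nat.factorial] at hexp
  have h2 : 2 + r ≤ exp w := by
    nlinarith [mul_le_mul hw hw (by linarith) (by linarith),
      pow_le_pow_left₀ (by linarith) hw 3, sq_nonneg (r - 7 / 3), sq_nonneg (r - 2),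
      pow_nonneg hr0.le 3]
  calc (2 + r) * exp (-r) ≤ exp w * exp (-r) := by gcongr
    _ = exp (-(3 / 4) * r * (1 - r⁻¹) ^ 2) := by
        rw [← exp_add, hw_def]; congr 1; field_simp; ring

lemma two_sub_le_two_add_mul_exp_neg {p : ℝ} (h0 : 0 ≤ p) (h1 : p ≤ 1) :
    2 - p ≤ (2 + p) * exp (-p) := by
  have h := Real.exp_bound (x := -p) (by rwa [abs_neg, abs_of_nonneg h0]) (n := 5) (by norm_num)
  rw [abs_neg, abs_of_nonneg h0] at h
  norm_num [Finset.sum_range_succ, Nat.factorial] at h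
  nlinarith [(abs_le.mp h).1, pow_nonneg h0 3, pow_nonneg h0 4, pow_nonneg h0 5, sq_nonneg p]

lemma sub_mul_sub_one_le_add_mul_exp_neg {c p : ℝ} (hc : 2 ≤ c) (h0 : 0 ≤ p) (h1 : p ≤ 1) :
    c - p * (c - 1) ≤ (c + p) * exp (-p) := by
  nlinarith [two_sub_le_two_add_mul_exp_neg h0 h1,
    mul_nonneg (sub_nonneg.2 hc) (sub_nonneg.2 (one_sub_le_exp_neg p))]

lemma max_sub_add_le {t : ℝ} (ht : t ∈ Icc (0 : ℝ) 1) (c u : ℝ) :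
    max (c - (t + u)) 0 ≤ (1 - t) * max (c - u) 0 + t * max (c - 1 - u) 0 := by
  obtain ⟨h0, h1⟩ := ht
  have := mul_nonneg (sub_nonneg.2 h1) (le_max_right (c - u) 0)
  have := mul_nonneg h0 (le_max_right (c - 1 - u) 0)
  have := mul_le_mul_of_nonneg_left (le_max_left (c - u) 0) (sub_nonneg.2 h1)
  have := mul_le_mul_of_nonneg_left (le_max_left (c - 1 - u) 0) h0
  refine max_le ?_ ?_ <;> linarith

namespace ProbabilityTheory

variable {Ω ι : Type*} [MeasurableSpace Ω] {P : Measure Ω}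

-- Cantelli's inequality: Markov's inequality for `(E X + θ - X)²`, with the optimal `θ = Var X / d`.
theorem measureReal_le_integral_sub_le [IsProbabilityMeasure P] {X : Ω → ℝ} (hX : MemLp X 2 P)
    {d : ℝ} (hd : 0 < d) :
    P.real {ω | X ω ≤ P[X] - d} ≤ Var[X; P] / (Var[X; P] + d ^ 2) := by
  set v := Var[X; P]
  have hv : 0 ≤ v := variance_nonneg X P
  set θ := v / d with hθ_def
  have hθ : 0 ≤ θ := by positivity
  have hZ : MemLp (fun ω => P[X] + θ - X ω) 2 P := (memLp_const _).sub hX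
  have hsecond : ∫ ω, (P[X] + θ - X ω) ^ 2 ∂P = v + θ ^ 2 := by
    have h := variance_eq_sub hZ
    rw [variance_const_sub hX.aestronglyMeasurable,
      integral_sub (integrable_const _) (hX.integrable one_le_two), integral_const] at h
    simp only [probReal_univ, smul_eq_mul, one_mul, add_sub_cancel_left, Pi.pow_apply] at h
    linarith
  have hmarkov := mul_meas_ge_le_integral_of_nonneg (ae_of_all _ fun ω => sq_nonneg _)
    hZ.integrable_sq ((d + θ) ^ 2)
  rw [hsecond] at hmarkov
  have hsub : P.real {ω | X ω ≤ P[X] - d} ≤ P.real {ω | (d + θ) ^ 2 ≤ (P[X] + θ - X ω) ^ 2} :=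
    measureReal_mono fun ω (hω : X ω ≤ P[X] - d) =>
      pow_le_pow_left₀ (by positivity : (0 : ℝ) ≤ d + θ) (by linarith) 2
  have key : (d + θ) ^ 2 * P.real {ω | X ω ≤ P[X] - d} ≤ v + θ ^ 2 :=
    (mul_le_mul_of_nonneg_left hsub (sq_nonneg _)).trans hmarkov
  have e1 : (d + θ) ^ 2 = (v + d ^ 2) ^ 2 / d ^ 2 := by rw [hθ_def]; field_simp; ring
  have e2 : v + θ ^ 2 = v * (v + d ^ 2) / d ^ 2 := by rw [hθ_def]; field_simp; ring
  rw [e1, e2, div_mul_eq_mul_div, div_le_div_iff_of_pos_right (by positivity)] at key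
  have hq : 0 ≤ P.real {ω | X ω ≤ P[X] - d} := measureReal_nonneg
  rw [le_div_iff₀ (by positivity)]
  nlinarith [sq_nonneg (v + d ^ 2)]

lemma variance_sum_le_sum_integral [IsProbabilityMeasure P] [Fintype ι] {Y : ι → Ω → ℝ}
    (hmeas : ∀ i, Measurable (Y i)) (hindep : iIndepFun Y P)
    (hY : ∀ i, ∀ᵐ ω ∂P, Y i ω ∈ Icc 0 1) :
    Var[fun ω => ∑ i, Y i ω; P] ≤ ∑ i, P[Y i] := by
  have h := IndepFun.variance_sum (s := Finset.univ)
    (fun i _ => memLp_of_bounded (hY i) (hmeas i).aestronglyMeasurable 2)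
    (fun i _ j _ hij => hindep.indepFun hij)
  rw [← Finset.sum_fn]
  refine h.le.trans (Finset.sum_le_sum fun i _ => ?_)
  have := variance_le_sub_mul_sub (hY i) (hmeas i).aemeasurable
  nlinarith [sq_nonneg P[Y i]]

lemma integral_mem_Icc_zero_one [IsProbabilityMeasure P] {Y : Ω → ℝ}
    (hY : ∀ᵐ ω ∂P, Y ω ∈ Icc 0 1) : P[Y] ∈ Icc 0 1 := by
  have h0 : ∀ᵐ ω ∂P, 0 ≤ Y ω := hY.mono fun ω h => h.1
  have h1 := integral_mono_of_nonneg h0 (integrable_const (1 : ℝ)) (hY.mono fun ω h => h.2)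
  exact ⟨integral_nonneg_of_ae h0, by simpa using h1⟩

lemma ae_sum_nonneg {Y : ι → Ω → ℝ} (hY : ∀ i, ∀ᵐ ω ∂P, Y i ω ∈ Icc 0 1) (s : Finset ι) :
    ∀ᵐ ω ∂P, 0 ≤ ∑ j ∈ s, Y j ω := by
  filter_upwards [(Filter.eventually_all_finset s).2 fun j _ => hY j] with ω hω
  exact Finset.sum_nonneg fun j hj => (hω j hj).1

lemma integrable_max_sub_zero [IsFiniteMeasure P] {T : Ω → ℝ} (hT : AEStronglyMeasurable T P)
    (hT0 : ∀ᵐ ω ∂P, 0 ≤ T ω) (c : ℝ) : Integrable (fun ω => max (c - T ω) 0) P := by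
  refine .of_bound (by fun_prop) |c| ?_
  filter_upwards [hT0] with ω hω
  rw [Real.norm_of_nonneg (le_max_right _ _)]
  exact max_le (by linarith [le_abs_self c]) (abs_nonneg c)

lemma IndepFun.integral_max_sub_add_le [IsProbabilityMeasure P] {Y T : Ω → ℝ}
    (hYT : IndepFun Y T P) (hYm : Measurable Y) (hTm : Measurable T)
    (hY : ∀ᵐ ω ∂P, Y ω ∈ Icc 0 1) (hT : ∀ᵐ ω ∂P, 0 ≤ T ω) (c : ℝ) :
    ∫ ω, max (c - (Y ω + T ω)) 0 ∂P ≤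
      (1 - P[Y]) * ∫ ω, max (c - T ω) 0 ∂P + P[Y] * ∫ ω, max (c - 1 - T ω) 0 ∂P := by
  have hYint : Integrable Y P := .of_mem_Icc 0 1 hYm.aemeasurable hY
  have hg (a : ℝ) : Integrable (fun ω => max (a - T ω) 0) P :=
    integrable_max_sub_zero hTm.aestronglyMeasurable hT a
  have hφ (a : ℝ) : Measurable fun x : ℝ => max (a - x) 0 := by fun_prop
  have hind1 : IndepFun (fun ω => 1 - Y ω) (fun ω => max (c - T ω) 0) P :=
    hYT.comp (by fun_prop : Measurable fun x : ℝ => 1 - x) (hφ c)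
  have hind2 : IndepFun Y (fun ω => max (c - 1 - T ω) 0) P :=
    hYT.comp measurable_id (hφ (c - 1))
  have hint1 : Integrable (fun ω => (1 - Y ω) * max (c - T ω) 0) P :=
    hind1.integrable_mul ((integrable_const 1).sub hYint) (hg c)
  have hint2 : Integrable (fun ω => Y ω * max (c - 1 - T ω) 0) P :=
    hind2.integrable_mul hYint (hg (c - 1))
  calc ∫ ω, max (c - (Y ω + T ω)) 0 ∂P
      ≤ ∫ ω, ((1 - Y ω) * max (c - T ω) 0 + Y ω * max (c - 1 - T ω) 0) ∂P := by
        refine integral_mono_ae ?_ (hint1.add hint2) ?_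
        · refine integrable_max_sub_zero (by fun_prop) ?_ c
          filter_upwards [hY, hT] with ω hYω hTω
          linarith [hYω.1]
        · filter_upwards [hY] with ω hYω
          exact max_sub_add_le hYω c (T ω)
    _ = (1 - P[Y]) * ∫ ω, max (c - T ω) 0 ∂P + P[Y] * ∫ ω, max (c - 1 - T ω) 0 ∂P := by
        rw [integral_add hint1 hint2,
          hind1.integral_fun_mul_eq_mul_integral (by fun_prop) (hg c).aestronglyMeasurable,
          hind2.integral_fun_mul_eq_mul_integral (by fun_prop) (hg (c - 1)).aestronglyMeasurable,
          integral_sub (integrable_const 1) hYint]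
        simp

section UnitIntervalSummands

variable [IsProbabilityMeasure P] {Y : ι → Ω → ℝ}

lemma iIndepFun.integral_max_sub_sum_insert_le [DecidableEq ι] (hindep : iIndepFun Y P)
    (hmeas : ∀ i, Measurable (Y i)) (hY : ∀ i, ∀ᵐ ω ∂P, Y i ω ∈ Icc 0 1) {s : Finset ι} {i : ι}
    (hi : i ∉ s) (c : ℝ) :
    ∫ ω, max (c - ∑ j ∈ insert i s, Y j ω) 0 ∂P ≤
      (1 - P[Y i]) * ∫ ω, max (c - ∑ j ∈ s, Y j ω) 0 ∂P +
        P[Y i] * ∫ ω, max (c - 1 - ∑ j ∈ s, Y j ω) 0 ∂P := by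
  simp_rw [Finset.sum_insert hi]
  refine IndepFun.integral_max_sub_add_le ?_ (hmeas i) (by fun_prop) (hY i) (ae_sum_nonneg hY s) c
  simpa only [Finset.sum_fn] using (hindep.indepFun_finsetSum_of_notMem hmeas hi).symm

lemma iIndepFun.integral_max_one_sub_sum_le (hindep : iIndepFun Y P)
    (hmeas : ∀ i, Measurable (Y i)) (hY : ∀ i, ∀ᵐ ω ∂P, Y i ω ∈ Icc 0 1) (s : Finset ι) :
    ∫ ω, max (1 - ∑ j ∈ s, Y j ω) 0 ∂P ≤ exp (-∑ j ∈ s, P[Y j]) := by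
  classical
  induction s using Finset.induction_on with
  | empty => simp
  | insert i s hi ih =>
    have hzero : ∫ ω, max (1 - 1 - ∑ j ∈ s, Y j ω) 0 ∂P = 0 := by
      refine integral_eq_zero_of_ae ?_
      filter_upwards [ae_sum_nonneg hY s] with ω hω
      simpa using hω
    calc ∫ ω, max (1 - ∑ j ∈ insert i s, Y j ω) 0 ∂P
        ≤ (1 - P[Y i]) * ∫ ω, max (1 - ∑ j ∈ s, Y j ω) 0 ∂P := by
          have h := hindep.integral_max_sub_sum_insert_le hmeas hY hi 1
          rwa [hzero, mul_zero, add_zero] at h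
      _ ≤ exp (-P[Y i]) * exp (-∑ j ∈ s, P[Y j]) := by
          gcongr
          exact one_sub_le_exp_neg _
      _ = exp (-∑ j ∈ insert i s, P[Y j]) := by
          rw [Finset.sum_insert hi, ← exp_add, neg_add]

lemma iIndepFun.integral_max_two_sub_sum_le (hindep : iIndepFun Y P)
    (hmeas : ∀ i, Measurable (Y i)) (hY : ∀ i, ∀ᵐ ω ∂P, Y i ω ∈ Icc 0 1) (s : Finset ι) :
    ∫ ω, max (2 - ∑ j ∈ s, Y j ω) 0 ∂P ≤
      (2 + ∑ j ∈ s, P[Y j]) * exp (-∑ j ∈ s, P[Y j]) := by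
  classical
  induction s using Finset.induction_on with
  | empty => simp
  | insert i s hi ih =>
    set ρ := ∑ j ∈ s, P[Y j]
    have hρ : 0 ≤ ρ := Finset.sum_nonneg fun j _ => (integral_mem_Icc_zero_one (hY j)).1
    obtain ⟨hm0, hm1⟩ := integral_mem_Icc_zero_one (hY i)
    calc ∫ ω, max (2 - ∑ j ∈ insert i s, Y j ω) 0 ∂P
        ≤ (1 - P[Y i]) * ∫ ω, max (2 - ∑ j ∈ s, Y j ω) 0 ∂P +
            P[Y i] * ∫ ω, max (2 - 1 - ∑ j ∈ s, Y j ω) 0 ∂P :=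
          hindep.integral_max_sub_sum_insert_le hmeas hY hi 2
      _ ≤ (1 - P[Y i]) * ((2 + ρ) * exp (-ρ)) + P[Y i] * exp (-ρ) := by
          gcongr
          simpa only [show (2 : ℝ) - 1 = 1 by norm_num]
            using hindep.integral_max_one_sub_sum_le hmeas hY s
      _ = ((2 + ρ) - P[Y i] * ((2 + ρ) - 1)) * exp (-ρ) := by ring
      _ ≤ ((2 + ρ) + P[Y i]) * exp (-P[Y i]) * exp (-ρ) := by
          gcongr
          exact sub_mul_sub_one_le_add_mul_exp_neg (by linarith) hm0 hm1
      _ = (2 + (P[Y i] + ρ)) * exp (-(P[Y i] + ρ)) := by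
          rw [mul_assoc, ← exp_add, neg_add]
          ring
      _ = (2 + ∑ j ∈ insert i s, P[Y j]) * exp (-∑ j ∈ insert i s, P[Y j]) := by
          rw [Finset.sum_insert hi]

variable [Fintype ι]

lemma measureReal_sum_le_one_le_div (hmeas : ∀ i, Measurable (Y i)) (hindep : iIndepFun Y P)
    (hY : ∀ i, ∀ᵐ ω ∂P, Y i ω ∈ Icc 0 1) {r : ℝ} (hr_def : ∑ i, P[Y i] = r) (hr : 1 < r) :
    P.real {ω | ∑ i, Y i ω ≤ 1} ≤ r / (r + (r - 1) ^ 2) := by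
  have hS : MemLp (fun ω => ∑ i, Y i ω) 2 P :=
    memLp_finsetSum _ fun i _ => memLp_of_bounded (hY i) (hmeas i).aestronglyMeasurable 2
  have hmean : P[fun ω => ∑ i, Y i ω] = r := by
    rw [integral_finsetSum _ fun i _ => .of_mem_Icc 0 1 (hmeas i).aemeasurable (hY i), hr_def]
  have hv := variance_sum_le_sum_integral hmeas hindep hY
  have hv0 := variance_nonneg (fun ω => ∑ i, Y i ω) P
  have hcantelli := measureReal_le_integral_sub_le hS (d := r - 1) (by linarith)
  rw [hmean, sub_sub_cancel] at hcantelli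
  refine hcantelli.trans ?_
  rw [div_le_div_iff₀ (by positivity) (by positivity)]
  nlinarith [sq_nonneg (r - 1)]

lemma measureReal_sum_le_one_le_two_add_mul_exp (hmeas : ∀ i, Measurable (Y i))
    (hindep : iIndepFun Y P) (hY : ∀ i, ∀ᵐ ω ∂P, Y i ω ∈ Icc 0 1) {r : ℝ}
    (hr_def : ∑ i, P[Y i] = r) :
    P.real {ω | ∑ i, Y i ω ≤ 1} ≤ (2 + r) * exp (-r) := by
  have hmarkov := mul_meas_ge_le_integral_of_nonneg
    (f := fun ω => max (2 - ∑ i, Y i ω) 0) (ae_of_all _ fun ω => le_max_right _ _)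
    (integrable_max_sub_zero (by fun_prop) (ae_sum_nonneg hY Finset.univ) 2) 1
  calc P.real {ω | ∑ i, Y i ω ≤ 1} ≤ P.real {ω | 1 ≤ max (2 - ∑ i, Y i ω) 0} :=
        measureReal_mono fun ω (hω : ∑ i, Y i ω ≤ 1) =>
          le_max_of_le_left (by linarith : (1 : ℝ) ≤ 2 - ∑ i, Y i ω)
    _ ≤ ∫ ω, max (2 - ∑ i, Y i ω) 0 ∂P := by simpa using hmarkov
    _ ≤ (2 + r) * exp (-r) := hr_def ▸ hindep.integral_max_two_sub_sum_le hmeas hY Finset.univ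

theorem measureReal_sum_le_one_le_exp (hmeas : ∀ i, Measurable (Y i)) (hindep : iIndepFun Y P)
    (hY : ∀ i, ∀ᵐ ω ∂P, Y i ω ∈ Icc 0 1) {r : ℝ} (hr_def : ∑ i, P[Y i] = r) (hr : 1 ≤ r) :
    P.real {ω | ∑ i, Y i ω ≤ 1} ≤ exp (-(3 / 4) * r * (1 - r⁻¹) ^ 2) := by
  rcases le_or_gt r (7 / 4) with hsmall | hlarge
  · rcases hr.eq_or_lt with rfl | hr1
    · simp
    · exact (measureReal_sum_le_one_le_div hmeas hindep hY hr_def hr1).trans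
        (div_add_sub_one_sq_le_exp hr hsmall)
  · exact (measureReal_sum_le_one_le_two_add_mul_exp hmeas hindep hY hr_def).trans
      (two_add_mul_exp_neg_le hlarge.le)

end UnitIntervalSummands

end ProbabilityTheory

/-- Let `X_1, …, X_n` be mutually independent nonnegative real random
variables on a probability space, each satisfying `X_i ≤ M` almost surely for a fixed
real `M > 0`.  Let `X = X_1 + ⋯ + X_n` and `μ = E[X]`, and suppose `μ ≥ M`.  Then
`Pr[X ≤ M] ≤ exp(−(3/4) · (μ/M) · (1 − M/μ)²)`. -/
theorem stmt9 {Ω : Type*} [MeasureSpace Ω] [IsProbabilityMeasure (ℙ : Measure Ω)]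
    (n : ℕ) (X : Fin n → Ω → ℝ) (M : ℝ) (hM : 0 < M)
    (hmeas : ∀ i, Measurable (X i))
    (hindep : iIndepFun X ℙ)
    (hnn : ∀ i, ∀ᵐ ω ∂ℙ, 0 ≤ X i ω)
    (hb : ∀ i, ∀ᵐ ω ∂ℙ, X i ω ≤ M)
    (μ : ℝ) (hμdef : μ = ∫ ω, (∑ i, X i ω) ∂ℙ) (hMμ : M ≤ μ) :
    ℙ {ω | (∑ i, X i ω) ≤ M} ≤
      ENNReal.ofReal (Real.exp (-(3 / 4) * (μ / M) * (1 - M / μ) ^ 2)) := by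
  set Y : Fin n → Ω → ℝ := fun i ω => X i ω / M
  have hYmeas (i : Fin n) : Measurable (Y i) := (hmeas i).div_const M
  have hYindep : iIndepFun Y ℙ := hindep.comp (fun _ x => x / M) fun _ => by fun_prop
  have hY (i : Fin n) : ∀ᵐ ω ∂ℙ, Y i ω ∈ Icc 0 1 := by
    filter_upwards [hnn i, hb i] with ω h0 h1
    exact ⟨div_nonneg h0 hM.le, (div_le_one hM).2 h1⟩
  have hr_def : ∑ i, ℙ[Y i] = μ / M := by
    rw [← integral_finsetSum _ fun i _ => .of_mem_Icc 0 1 (hYmeas i).aemeasurable (hY i),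
      hμdef, ← integral_div]
    simp_rw [Y, Finset.sum_div]
  have hevent : {ω | ∑ i, Y i ω ≤ 1} = {ω | ∑ i, X i ω ≤ M} := by
    ext ω
    simp only [Y, mem_ofPred_eq, ← Finset.sum_div, div_le_one hM]
  have h := measureReal_sum_le_one_le_exp hYmeas hYindep hY hr_def ((one_le_div hM).2 hMμ)
  rw [hevent, inv_div] at h
  exact (ENNReal.le_ofReal_iff_toReal_le (measure_ne_top _ _) (exp_pos _).le).2 h
end

section
/- Consider a pDLS instance and, for each chain P ∈ 𝒫, a suffix chain Ŝ^P = (Ŝ^P_1,…,Ŝ^P_k). Suppose that for every i ∈ [k] the coverage condition ∑_{P∈𝒫} ∑_{j ∈ Ŝ^P_i} p_j ≥ Γ − D_i holds. Then there exists a feasible schedule (a bijection σ : [n] → [n] with σ(j) ≤ σ(j') whenever j ⪯ j' on a common chain) such that every job j that is late under σ (i.e. whose completion time C_j = ∑_{j' : σ(j') ≤ σ(j)} p_{j'} exceeds d_j) belongs to Ŝ^P_{i(j)}, where P is the chain containing j. In particular the total penalty of this schedule is at most ∑_{P∈𝒫} ∑_{j ∈ P : j ∈ Ŝ^P_{i(j)}}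 w_j. -/
/-!
Give each job `j` on chain `P` its depth `δ j`, the number of indices `i` with `j ∈ Ŝ^P_i`. As
the `Ŝ^P_i` decrease in `i`, `j ∈ Ŝ^P_i ↔ i < δ j`, and `δ` increases along every chain.
Schedule the jobs by increasing depth. If `j ∉ Ŝ_{i(j)}`, every job finishing no later than `j`
has depth at most `δ j ≤ i(j)`, so lies outside `Ŝ_{i(j)}`; by the coverage condition these jobs
take total time at most `D_{i(j)}`, so `j` is on time.
-/

open Finset

theorem exists_equiv_fin_le_iff {J β : Type*} [Fintype J] [LinearOrder β] {n : ℕ}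
    (hn : Fintype.card J = n) (r : J → β) (hr : Function.Injective r) :
    ∃ σ : J ≃ Fin n, ∀ a b, σ a ≤ σ b ↔ r a ≤ r b := by
  let _ : LinearOrder J := LinearOrder.lift' r hr
  let e := (Fintype.orderIsoFinOfCardEq J hn).symm
  exact ⟨e.toEquiv, fun _ _ => e.le_iff_le⟩

theorem Finset.sum_filter_sigma {ι M : Type*} {α : ι → Type*} [Fintype ι]
    [∀ i, Fintype (α i)] [AddCommMonoid M] (p : (Σ i, α i) → Prop) [DecidablePred p]
    (f : (Σ i, α i) → M) :
    ∑ j with p j, f j = ∑ i, ∑ a with p ⟨i, a⟩, f ⟨i, a⟩ := by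
  simp_rw [sum_filter, ← univ_sigma_univ, sum_sigma]

theorem Finset.sum_filter_not_le_of_sub_le_sum_filter {J : Type*} [Fintype J] (s : J → Prop)
    [DecidablePred s] (p : J → ℕ) {D : ℕ}
    (h : (∑ j, (p j : ℤ)) - D ≤ ∑ j with s j, (p j : ℤ)) :
    ∑ j with ¬ s j, p j ≤ D := by
  have hsplit := sum_filter_add_sum_filter_not univ s (fun j => (p j : ℤ))
  zify
  linarith

def suffixDepth {k m : ℕ} (S : Fin k → Fin (m + 1)) (a : Fin m) : ℕ :=
  #{i | S i ≤ a.castSucc}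

theorem lt_suffixDepth_iff {k m : ℕ} {S : Fin k → Fin (m + 1)} (hS : Monotone S) (i : Fin k)
    (a : Fin m) : i.val < suffixDepth S a ↔ S i ≤ a.castSucc :=
  Tuple.lt_card_le_iff_apply_le_of_monotone hS

theorem suffixDepth_mono {k m : ℕ} (S : Fin k → Fin (m + 1)) : Monotone (suffixDepth S) :=
  fun _ _ hab => card_le_card fun _ => by
    simp only [mem_filter, mem_univ, true_and]
    exact fun h => h.trans (Fin.castSucc_le_castSucc_iff.mpr hab)

theorem stmt11_general (q k : ℕ) (m : Fin q → ℕ)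
    (p w d : (Σ P : Fin q, Fin (m P)) → ℕ)
    (D : Fin k → ℕ)
    (iop : (Σ P : Fin q, Fin (m P)) → Fin k)
    (hd : ∀ j, d j = D (iop j))
    (S : (P : Fin q) → Fin k → Fin (m P + 1))
    (hS : ∀ (P : Fin q) (i i' : Fin k), i ≤ i' → S P i ≤ S P i')
    (hcov : ∀ i : Fin k,
      (∑ j : Σ P : Fin q, Fin (m P), (p j : ℤ)) - (D i : ℤ) ≤
        ∑ P : Fin q, ∑ j ∈ Finset.univ.filter (fun j : Fin (m P) => S P i ≤ j.castSucc),
          (p ⟨P, j⟩ : ℤ)) :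
    ∃ σ : (Σ P : Fin q, Fin (m P)) ≃ Fin (∑ P : Fin q, m P),
      (∀ (P : Fin q) (a b : Fin (m P)), a ≤ b → σ ⟨P, a⟩ ≤ σ ⟨P, b⟩) ∧
      (∀ j : Σ P : Fin q, Fin (m P),
        d j < (∑ j' ∈ Finset.univ.filter (fun j' => σ j' ≤ σ j), p j') →
          S j.1 (iop j) ≤ (j.2).castSucc) ∧
      (∑ j ∈ Finset.univ.filter
          (fun j : Σ P : Fin q, Fin (m P) =>
            d j < ∑ j' ∈ Finset.univ.filter (fun j' => σ j' ≤ σ j), p j'), w j)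
        ≤ ∑ P : Fin q, ∑ j ∈ Finset.univ.filter
            (fun j : Fin (m P) => S P (iop ⟨P, j⟩) ≤ j.castSucc), w ⟨P, j⟩ := by
  let depth (j : Σ P : Fin q, Fin (m P)) : ℕ := suffixDepth (S j.1) j.2
  have mem_suffix_iff (j : Σ P : Fin q, Fin (m P)) (i : Fin k) :
      S j.1 i ≤ j.2.castSucc ↔ i.val < depth j :=
    (lt_suffixDepth_iff (fun _ _ => hS j.1 _ _) i j.2).symm
  -- Ties in depth are broken by the lexicographic order of jobs, which respects every chain.
  obtain ⟨σ, hσ⟩ := exists_equiv_fin_le_iff (n := ∑ P, m P) (by simp [Fintype.card_sigma])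
    (fun j => toLex (depth j, toLex j)) (toLex.injective.comp fun _ _ h => (Prod.ext_iff.1 h).2)
  have depth_le_of_le {a b} (h : σ a ≤ σ b) : depth a ≤ depth b :=
    Prod.Lex.monotone_fst _ _ ((hσ a b).1 h)
  have late_mem_suffix (j) (hj : d j < ∑ j' with σ j' ≤ σ j, p j') :
      S j.1 (iop j) ≤ j.2.castSucc := by
    by_contra hout
    have hdepth : depth j ≤ iop j := not_lt.1 (hout ∘ (mem_suffix_iff j _).2)
    have hearly : univ.filter (fun j' => σ j' ≤ σ j) ⊆
        univ.filter (fun j' => ¬ S j'.1 (iop j) ≤ j'.2.castSucc) := by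
      intro j' hj'
      simp only [mem_filter, mem_univ, true_and, mem_suffix_iff, not_lt] at hj' ⊢
      exact (depth_le_of_le hj').trans hdepth
    refine hj.not_ge ?_
    calc ∑ j' with σ j' ≤ σ j, p j'
        ≤ ∑ j' with ¬ S j'.1 (iop j) ≤ j'.2.castSucc, p j' := sum_le_sum_of_subset hearly
      _ ≤ D (iop j) := sum_filter_not_le_of_sub_le_sum_filter _ p
          (by rw [sum_filter_sigma]; exact hcov (iop j))
      _ = d j := (hd j).symm
  refine ⟨σ, fun P a b hab => ?_, late_mem_suffix, ?_⟩
  · exact (hσ _ _).2 <| Prod.Lex.toLex_mono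
      ⟨suffixDepth_mono _ hab, Sigma.Lex.le_def.2 (Or.inr ⟨rfl, hab⟩)⟩
  · rw [← sum_filter_sigma (fun j => S j.1 (iop j) ≤ j.2.castSucc)]
    exact sum_le_sum_of_subset (monotone_filter_right _ fun j _ => late_mem_suffix j)

/-- Consider a pDLS instance whose jobs are partitioned into chains
`P ∈ Fin q` with jobs `Fin (m P)` (ordered by `⪯` = the order on `Fin (m P)`), with
processing times `p`, penalties `w`, deadlines `d j = D (iop j)` where
`D : Fin k → ℕ` is strictly increasing.  For each chain `P` let
`Ŝ^P = (Ŝ^P_1,…,Ŝ^P_k)` be a suffix chain, encoded by monotone starting points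
`S P : Fin k → Fin (m P + 1)`, so that `Ŝ^P_i = {j : S P i ≤ j.castSucc}`.
If for every `i ∈ [k]` the coverage condition
`∑_{P} ∑_{j ∈ Ŝ^P_i} p_j ≥ Γ − D_i` holds (`Γ` = total processing time), then there
is a feasible schedule (a bijection `σ` to `Fin n` respecting each chain's order) such
that every job `j` late under `σ` (completion time `C_j = ∑_{j' : σ j' ≤ σ j} p_{j'}`
exceeds `d_j`) lies in `Ŝ^P_{i(j)}`; in particular its total penalty is at most
`∑_P ∑_{j ∈ P : j ∈ Ŝ^P_{i(j)}} w_j`. -/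
theorem stmt11 (q k : ℕ) (m : Fin q → ℕ)
    (p w d : (Σ P : Fin q, Fin (m P)) → ℕ)
    (D : Fin k → ℕ) (hD : StrictMono D)
    (iop : (Σ P : Fin q, Fin (m P)) → Fin k)
    (hd : ∀ j, d j = D (iop j))
    (S : (P : Fin q) → Fin k → Fin (m P + 1))
    (hS : ∀ (P : Fin q) (i i' : Fin k), i ≤ i' → S P i ≤ S P i')
    (hcov : ∀ i : Fin k,
      (∑ j : Σ P : Fin q, Fin (m P), (p j : ℤ)) - (D i : ℤ) ≤
        ∑ P : Fin q, ∑ j ∈ Finset.univ.filter (fun j : Fin (m P) => S P i ≤ j.castSucc),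
          (p ⟨P, j⟩ : ℤ)) :
    ∃ σ : (Σ P : Fin q, Fin (m P)) ≃ Fin (∑ P : Fin q, m P),
      (∀ (P : Fin q) (a b : Fin (m P)), a ≤ b → σ ⟨P, a⟩ ≤ σ ⟨P, b⟩) ∧
      (∀ j : Σ P : Fin q, Fin (m P),
        d j < (∑ j' ∈ Finset.univ.filter (fun j' => σ j' ≤ σ j), p j') →
          S j.1 (iop j) ≤ (j.2).castSucc) ∧
      (∑ j ∈ Finset.univ.filter
          (fun j : Σ P : Fin q, Fin (m P) =>
            d j < ∑ j' ∈ Finset.univ.filter (fun j' => σ j' ≤ σ j), p j'), w j)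
        ≤ ∑ P : Fin q, ∑ j ∈ Finset.univ.filter
            (fun j : Fin (m P) => S P (iop ⟨P, j⟩) ≤ j.castSucc), w ⟨P, j⟩ :=
  stmt11_general q k m p w d D iop hd S hS hcov
end

section
/- Let Θ ≥ 0 be a real, let f : [0,1] → ℝ be nonincreasing with 0 ≤ f(α) ≤ Θ for all α, and let g : [0,1] → ℝ be nondecreasing with 0 ≤ g(α) ≤ Θ for all α. If ∫₀¹ (f(α) + g(α)) dα ≥ 2Θ, then f(α) + g(α) ≥ Θ for every α ∈ [0,1]. -/
/-!
Fix `α`. For any `β`, one of the two functions is at most its value at `α` (which is `≥ 0`)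
and the other is at most `Θ`, so `f β + g β ≤ f α + g α + Θ`. Integrating over `[0, 1]` and
comparing with the assumed lower bound `2Θ` gives `Θ ≤ f α + g α`.
-/

open Set MeasureTheory

theorem add_le_add_add_of_antitoneOn_of_monotoneOn {ι : Type*} [LinearOrder ι] {s : Set ι}
    {f g : ι → ℝ} {Θ : ℝ} (hf : AntitoneOn f s) (hg : MonotoneOn g s)
    (hfb : ∀ x ∈ s, 0 ≤ f x ∧ f x ≤ Θ) (hgb : ∀ x ∈ s, 0 ≤ g x ∧ g x ≤ Θ)
    {x y : ι} (hx : x ∈ s) (hy : y ∈ s) :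
    f y + g y ≤ f x + g x + Θ := by
  rcases le_total y x with hyx | hxy
  · linarith [hg hy hx hyx, (hfb y hy).2, (hfb x hx).1]
  · linarith [hf hx hy hxy, (hgb y hy).2, (hgb x hx).1]

theorem intervalIntegral_le_mul_of_le_const {a b c : ℝ} {h : ℝ → ℝ} (hab : a ≤ b)
    (hi : IntervalIntegrable h volume a b) (hc : ∀ x ∈ Icc a b, h x ≤ c) :
    ∫ x in a..b, h x ≤ (b - a) * c := by
  calc ∫ x in a..b, h x ≤ ∫ _ in a..b, c :=
        intervalIntegral.integral_mono_on hab hi intervalIntegrable_const hc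
    _ = (b - a) * c := by rw [intervalIntegral.integral_const, smul_eq_mul]

theorem stmt12_general (Θ : ℝ) (f g : ℝ → ℝ)
    (hf : AntitoneOn f (Set.Icc 0 1)) (hg : MonotoneOn g (Set.Icc 0 1))
    (hfb : ∀ α ∈ Set.Icc (0 : ℝ) 1, 0 ≤ f α ∧ f α ≤ Θ)
    (hgb : ∀ α ∈ Set.Icc (0 : ℝ) 1, 0 ≤ g α ∧ g α ≤ Θ)
    (hint : 2 * Θ ≤ ∫ α in (0 : ℝ)..1, (f α + g α)) :
    ∀ α ∈ Set.Icc (0 : ℝ) 1, Θ ≤ f α + g α := by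
  intro α hα
  have hfg : IntervalIntegrable (fun β => f β + g β) volume 0 1 := by
    rw [← uIcc_of_le zero_le_one] at hf hg
    exact hf.intervalIntegrable.add hg.intervalIntegrable
  have hle : ∫ β in (0 : ℝ)..1, (f β + g β) ≤ (1 - 0) * (f α + g α + Θ) :=
    intervalIntegral_le_mul_of_le_const zero_le_one hfg fun β hβ =>
      add_le_add_add_of_antitoneOn_of_monotoneOn hf hg hfb hgb hα hβ
  linarith

/-- Let `Θ ≥ 0`, let `f : [0,1] → ℝ` be nonincreasing with
`0 ≤ f ≤ Θ` on `[0,1]`, and let `g : [0,1] → ℝ` be nondecreasing with `0 ≤ g ≤ Θ` on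
`[0,1]`.  If `∫₀¹ (f(α) + g(α)) dα ≥ 2Θ`, then `f(α) + g(α) ≥ Θ` for every
`α ∈ [0,1]`. -/
theorem stmt12 (Θ : ℝ) (hΘ : 0 ≤ Θ) (f g : ℝ → ℝ)
    (hf : AntitoneOn f (Set.Icc 0 1)) (hg : MonotoneOn g (Set.Icc 0 1))
    (hfb : ∀ α ∈ Set.Icc (0 : ℝ) 1, 0 ≤ f α ∧ f α ≤ Θ)
    (hgb : ∀ α ∈ Set.Icc (0 : ℝ) 1, 0 ≤ g α ∧ g α ≤ Θ)
    (hint : 2 * Θ ≤ ∫ α in (0 : ℝ)..1, (f α + g α)) :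
    ∀ α ∈ Set.Icc (0 : ℝ) 1, Θ ≤ f α + g α :=
  stmt12_general Θ f g hf hg hfb hgb hint
end

section
/- Fix reals ε > 0 and C > 0, and let γ : ℕ → ℝ with 0 ≤ γ(k) ≤ C/(ln k)^ε for all k ≥ 2. Then lim_{k→∞} ( 1 − 2^{−⌈2·γ(k)·ln k⌉} )^k = 0. -/
/-! Write `L = log k` and `m = ⌈2 γ(k) L⌉`. The growth bound on `γ` gives `m ≤ 2C L^{1-ε} + 1`,
so `k · 2^{-m} ≥ exp (L - (2C L^{1-ε} + 1) log 2)`, which tends to infinity because `L^{1-ε} = o(L)`.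
Since `(1 - u)^k ≤ exp (-k u)`, the power tends to `0`. -/

open Filter Real Topology

lemma tendsto_one_sub_pow_of_tendsto_mul {u : ℕ → ℝ} (hu : ∀ᶠ k in atTop, u k ≤ 1)
    (hku : Tendsto (fun k : ℕ => k * u k) atTop atTop) :
    Tendsto (fun k => (1 - u k) ^ k) atTop (𝓝 0) := by
  refine squeeze_zero' ?_ ?_ (tendsto_exp_neg_atTop_nhds_zero.comp hku)
  · filter_upwards [hu] with k hk using pow_nonneg (sub_nonneg.2 hk) k
  · filter_upwards [hu] with k hk
    calc (1 - u k) ^ k ≤ exp (-u k) ^ k :=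
          pow_le_pow_left₀ (sub_nonneg.2 hk) (one_sub_le_exp_neg _) k
      _ = exp (-(k * u k)) := by rw [← exp_nat_mul]; ring_nf

lemma tendsto_sub_mul_rpow_one_sub_atTop (c : ℝ) {ε : ℝ} (hε : 0 < ε) :
    Tendsto (fun t : ℝ => t - c * t ^ (1 - ε)) atTop atTop := by
  have h : Tendsto (fun t : ℝ => 1 - c * t ^ (-ε)) atTop (𝓝 1) := by
    simpa using ((tendsto_rpow_neg_atTop hε).const_mul c).const_sub 1
  refine (tendsto_id.atTop_mul_pos one_pos h).congr' ?_
  filter_upwards [eventually_gt_atTop 0] with t ht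
  rw [show 1 - ε = 1 + -ε by ring, rpow_add ht, rpow_one, id]
  ring

lemma ceil_two_mul_mul_le {g y C ε : ℝ} (hy : 0 < y) (hg : g ≤ C / y ^ ε) :
    (⌈2 * g * y⌉ : ℝ) ≤ 2 * C * y ^ (1 - ε) + 1 := by
  have hgy : g * y ≤ C * y ^ (1 - ε) :=
    calc g * y ≤ C / y ^ ε * y := mul_le_mul_of_nonneg_right hg hy.le
      _ = C * y ^ (1 - ε) := by rw [rpow_sub hy, rpow_one]; field_simp
  linarith [Int.ceil_lt_add_one (2 * g * y)]

lemma exp_log_sub_mul_log_two_le {x a : ℝ} {m : ℤ} (hx : 0 < x) (hm : (m : ℝ) ≤ a) :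
    exp (log x - a * log 2) ≤ x * (2 : ℝ) ^ (-m) := by
  have h2m : x * (2 : ℝ) ^ (-m) = exp (log x - m * log 2) := by
    rw [← rpow_intCast, rpow_def_of_pos two_pos, exp_sub, exp_log hx, Int.cast_neg, mul_neg,
      exp_neg, mul_comm (log 2), div_eq_mul_inv]
  rw [h2m]
  gcongr

theorem stmt15_general (ε C : ℝ) (hε : 0 < ε) (γ : ℕ → ℝ)
    (hγ : ∀ k : ℕ, 2 ≤ k → 0 ≤ γ k ∧ γ k ≤ C / (Real.log k) ^ ε) :
    Filter.Tendsto
      (fun k : ℕ => (1 - (2 : ℝ) ^ (-⌈2 * γ k * Real.log k⌉ : ℤ)) ^ k)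
      Filter.atTop (nhds 0) := by
  have hlog_pos : ∀ k : ℕ, 2 ≤ k → 0 < log k := fun k hk =>
    log_pos (by exact_mod_cast hk)
  have hlower : Tendsto (fun k : ℕ => exp (log k - (2 * C * log k ^ (1 - ε) + 1) * log 2))
      atTop atTop := by
    refine (tendsto_exp_atTop.comp ((tendsto_atTop_add_const_right _ (-log 2)
      (tendsto_sub_mul_rpow_one_sub_atTop (2 * C * log 2) hε)).comp
      (tendsto_log_atTop.comp tendsto_natCast_atTop_atTop))).congr fun k => ?_
    simp only [Function.comp_apply]
    ring_nf
  refine tendsto_one_sub_pow_of_tendsto_mul ?_ (tendsto_atTop_mono' _ ?_ hlower)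
  · filter_upwards [eventually_ge_atTop 2] with k hk
    have hγk := (hγ k hk).1
    exact zpow_le_one_of_nonpos₀ one_le_two
      (neg_nonpos.2 (Int.ceil_nonneg (by have := hlog_pos k hk; positivity)))
  · filter_upwards [eventually_ge_atTop 2] with k hk
    exact exp_log_sub_mul_log_two_le (by positivity)
      (ceil_two_mul_mul_le (hlog_pos k hk) (hγ k hk).2)

/-- Fix reals `ε > 0` and `C > 0`, and let `γ : ℕ → ℝ` satisfy
`0 ≤ γ(k) ≤ C/(ln k)^ε` for all `k ≥ 2`.  Then
`lim_{k→∞} (1 − 2^{−⌈2·γ(k)·ln k⌉})^k = 0`. -/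
theorem stmt15 (ε C : ℝ) (hε : 0 < ε) (hC : 0 < C) (γ : ℕ → ℝ)
    (hγ : ∀ k : ℕ, 2 ≤ k → 0 ≤ γ k ∧ γ k ≤ C / (Real.log k) ^ ε) :
    Filter.Tendsto
      (fun k : ℕ => (1 - (2 : ℝ) ^ (-⌈2 * γ k * Real.log k⌉ : ℤ)) ^ k)
      Filter.atTop (nhds 0) :=
  stmt15_general ε C hε γ hγ
end

section
/- Consider a pDLS instance in which every job has the same deadline D: jobs [n] with processing times p_j ∈ ℕ and penalties w_j ∈ ℕ, and precedence given by a partial order ⪯ on [n]. Then the minimum total penalty over all feasible schedules equals ∑_{j∈[n]} w_j − max{ ∑_{j∈A} w_j : A ⊆ [n], A is downward closed under ⪯, and ∑_{j∈A} p_j ≤ D }. -/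
/-!
An on-time job finishes by `D`, hence so do all jobs scheduled before it: the on-time jobs of a
feasible schedule form a downward closed set of total processing time at most `D`, and the
penalty is the weight of its complement. Conversely, a downward closed set `A` with
`∑_{j ∈ A} p_j ≤ D` can be scheduled first (take a linear extension of `⪯` refined
lexicographically by "not in `A`"), and then every job of `A` is on time.
-/

open Finset Function

namespace SingleDeadline

variable {J α : Type*} [Fintype J]

section CompletionTime

variable [LinearOrder α] (σ : J → α) (p : J → ℕ) (D : ℕ)

def completionTime (j : J) : ℕ :=
  ∑ j' ∈ univ.filter (fun j' => σ j' ≤ σ j), p j'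

def lateJobs : Finset J :=
  univ.filter (fun j => D < completionTime σ p j)

variable {σ p D}

theorem completionTime_le_of_le {i j : J} (h : σ i ≤ σ j) :
    completionTime σ p i ≤ completionTime σ p j :=
  sum_le_sum_of_subset fun _ hk => by
    simp only [mem_filter, mem_univ, true_and] at hk ⊢
    exact hk.trans h

theorem sum_le_of_forall_completionTime_le {s : Finset J}
    (hs : ∀ j ∈ s, completionTime σ p j ≤ D) : ∑ j ∈ s, p j ≤ D := by
  rcases s.eq_empty_or_nonempty with rfl | hne
  · simp
  obtain ⟨j, hj, hmax⟩ := s.exists_max_image σ hne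
  refine le_trans (sum_le_sum_of_subset fun k hk => ?_) (hs j hj)
  simpa using hmax k hk

theorem completionTime_le_sum_of_initial {A : Finset J}
    (hA : ∀ j ∈ A, ∀ j', σ j' ≤ σ j → j' ∈ A) {j : J} (hj : j ∈ A) :
    completionTime σ p j ≤ ∑ k ∈ A, p k :=
  sum_le_sum_of_subset fun k hk => hA j hj k (by simpa using hk)

variable [DecidableEq J]

theorem mem_compl_lateJobs {j : J} : j ∈ (lateJobs σ p D)ᶜ ↔ completionTime σ p j ≤ D := by
  simp [lateJobs]

theorem isLowerSet_compl_lateJobs [Preorder J] (hσ : Monotone σ) :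
    IsLowerSet (((lateJobs σ p D)ᶜ : Finset J) : Set J) := fun _ _ hle hj => by
  rw [mem_coe, mem_compl_lateJobs] at hj ⊢
  exact (completionTime_le_of_le (hσ hle)).trans hj

theorem sum_compl_lateJobs_le : ∑ j ∈ (lateJobs σ p D)ᶜ, p j ≤ D :=
  sum_le_of_forall_completionTime_le fun _ hj => mem_compl_lateJobs.mp hj

theorem lateJobs_subset_compl {A : Finset J} (hA : ∀ j ∈ A, ∀ j', σ j' ≤ σ j → j' ∈ A)
    (hAD : ∑ j ∈ A, p j ≤ D) : lateJobs σ p D ⊆ Aᶜ := fun _ hj =>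
  mem_compl.mpr fun hjA =>
    mem_compl.mp (mem_compl_lateJobs.mpr ((completionTime_le_sum_of_initial hA hjA).trans hAD)) hj

end CompletionTime

theorem exists_equiv_fin_le_iff [LinearOrder α] (f : J → α) (hf : Injective f) :
    ∃ σ : J ≃ Fin (Fintype.card J), ∀ a b, σ a ≤ σ b ↔ f a ≤ f b := by
  classical
  let e := Fintype.orderIsoFinOfCardEq (Set.range f) (Set.card_range_of_injective hf)
  exact ⟨(Equiv.ofInjective f hf).trans e.symm.toEquiv, fun _ _ => e.symm.le_iff_le⟩

theorem exists_monotone_equiv_fin_initial [PartialOrder J] {A : Set J} (hA : IsLowerSet A) :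
    ∃ σ : J ≃ Fin (Fintype.card J), Monotone σ ∧ ∀ j ∈ A, ∀ j', σ j' ≤ σ j → j' ∈ A := by
  classical
  let f : J → Bool ×ₗ LinearExtension J := fun j => toLex (decide (j ∉ A), toLinearExtension j)
  have hf_mono : Monotone f := by
    refine Prod.Lex.toLex_mono.comp (Monotone.prodMk (fun a b hab => ?_) toLinearExtension.monotone)
    by_cases hb : b ∈ A
    · simp [hA hab hb, hb]
    · simp [hb]
  obtain ⟨σ, hσ⟩ := exists_equiv_fin_le_iff f fun a b h => congrArg (fun x => (ofLex x).2) h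
  refine ⟨σ, fun a b hab => (hσ a b).mpr (hf_mono hab), fun j hj j' hj'j => ?_⟩
  by_contra hj'
  have h_lt : f j < f j' := Prod.Lex.toLex_lt_toLex.mpr (Or.inl (by simp [hj, hj']))
  exact h_lt.not_ge ((hσ j' j).mp hj'j)

end SingleDeadline

open SingleDeadline

/-- Consider a pDLS instance in which every job has the same deadline
`D`: a finite partially ordered set `J` of jobs with processing times `p` and penalties
`w`.  A feasible schedule is a bijection `σ : J ≃ Fin |J|` with `σ j ≤ σ j'` whenever
`j ⪯ j'`; job `j` is late (penalty `w j`) iff its completion time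
`C_j = ∑_{j' : σ j' ≤ σ j} p_{j'}` exceeds `D`.  Then the minimum total penalty over
all feasible schedules equals
`∑_j w_j − max{ ∑_{j∈A} w_j : A ⊆ J downward closed, ∑_{j∈A} p_j ≤ D }`. -/
theorem stmt16 (J : Type*) [Fintype J] [PartialOrder J] [DecidableEq J]
    (p w : J → ℕ) (D : ℕ) :
    sInf {c : ℕ | ∃ σ : J ≃ Fin (Fintype.card J),
        (∀ a b : J, a ≤ b → σ a ≤ σ b) ∧
        c = ∑ j ∈ Finset.univ.filter
              (fun j : J =>
                D < ∑ j' ∈ Finset.univ.filter (fun j' : J => σ j' ≤ σ j), p j'), w j}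
    = (∑ j : J, w j) -
      sSup {v : ℕ | ∃ A : Finset J,
        (∀ j ∈ A, ∀ j' : J, j' ≤ j → j' ∈ A) ∧
        (∑ j ∈ A, p j) ≤ D ∧ v = ∑ j ∈ A, w j} := by
  set T := {v : ℕ | ∃ A : Finset J,
        (∀ j ∈ A, ∀ j' : J, j' ≤ j → j' ∈ A) ∧ (∑ j ∈ A, p j) ≤ D ∧ v = ∑ j ∈ A, w j}
  have hT_bdd : BddAbove T := ⟨∑ j, w j, by
    rintro _ ⟨A, -, -, rfl⟩
    exact sum_le_sum_of_subset (subset_univ A)⟩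
  obtain ⟨A, hA, hAD, hAT⟩ : sSup T ∈ T := Nat.sSup_mem ⟨0, ∅, by simp, by simp, by simp⟩ hT_bdd
  have h_lower (σ : J ≃ Fin (Fintype.card J)) (hσ : Monotone σ) :
      ∑ j, w j - sSup T ≤ ∑ j ∈ lateJobs σ p D, w j := by
    have h_onTime : ∑ j ∈ (lateJobs σ p D)ᶜ, w j ≤ sSup T :=
      le_csSup hT_bdd ⟨_, fun j hj j' hle => isLowerSet_compl_lateJobs hσ hle hj,
        sum_compl_lateJobs_le, rfl⟩
    have h_split := sum_add_sum_compl (lateJobs σ p D) w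
    omega
  obtain ⟨σ, hσ, hσA⟩ :=
    exists_monotone_equiv_fin_initial (A := (A : Set J)) fun _ _ hle hj => hA _ hj _ hle
  refine IsLeast.csInf_eq ⟨⟨σ, fun a b hab => hσ hab, le_antisymm (h_lower σ hσ) ?_⟩, ?_⟩
  · have h_late := sum_le_sum_of_subset (f := w) (lateJobs_subset_compl hσA hAD)
    have h_split := sum_add_sum_compl A w
    change ∑ j ∈ lateJobs σ p D, w j ≤ _
    omega
  · rintro _ ⟨τ, hτ, rfl⟩
    exact h_lower τ fun a b hab => hτ a b hab
end

section
/- Consider a pDLS instance with chains 𝒫 = {P_1,…,P_q}. For a vector V = (V^P)_{P∈𝒫} where each V^P is a suffix of P, and a time t ∈ ℕ, define OPT(V, t) recursively by: OPT(V, t) = 0 if all V^P are empty, and otherwise OPT(V, t) = min over chains P with V^P ≠ ∅ of [ cost(j, t) + OPT(V ∖ j, t + p_j) ], where j = min(V^P) is the ⪯-least job of V^P, cost(j, t) = w_j if d_j < t + p_j and 0 otherwise, and V ∖ j removes j from V^P. Then for every such V and t, OPT(V, t) equals the minimum total penalty achievable by executing the jobs of ⋃_P V^P consecutively starting at time t in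 an order respecting each chain's order (job j incurring penalty w_j iff its completion time exceeds d_j). In particular, OPT evaluated at the vector of full chains and t = 0 equals the minimum total penalty of a feasible schedule of the instance. -/
namespace S17
variable {q : ℕ} {m : Fin q → ℕ}

abbrev J (V : (P : Fin q) → Fin (m P + 1)) := {y : Σ P : Fin q, Fin (m P) // V y.1 ≤ y.2.castSucc}

variable (p w d : (Σ P : Fin q, Fin (m P)) → ℕ)

def cost (V : (P : Fin q) → Fin (m P + 1)) (g : J V → Fin (Fintype.card (J V))) (t : ℕ) : ℕ :=
  ∑ a ∈ Finset.univ.filter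
      (fun a : J V => d a.1 < t + ∑ b ∈ Finset.univ.filter (fun b : J V => g b ≤ g a), p b.1),
    w a.1

def Costs (V : (P : Fin q) → Fin (m P + 1)) (t : ℕ) : Set ℕ :=
  {c | ∃ σ : J V ≃ Fin (Fintype.card (J V)),
      (∀ a b : J V, a.1.1 = b.1.1 → a.1.2.val ≤ b.1.2.val → σ a ≤ σ b) ∧
      c = cost p w d V (⇑σ) t}

variable {p w d}

def nxt (V : (P : Fin q) → Fin (m P + 1)) (P : Fin q) (h : (V P).val < m P) :
    (P : Fin q) → Fin (m P + 1) :=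
  Function.update V P ⟨(V P).val + 1, Nat.succ_lt_succ h⟩

def jb (V : (P : Fin q) → Fin (m P + 1)) (P : Fin q) (h : (V P).val < m P) :
    Σ P : Fin q, Fin (m P) := ⟨P, ⟨(V P).val, h⟩⟩

lemma jb_good (V : (P : Fin q) → Fin (m P + 1)) (P : Fin q) (h : (V P).val < m P) :
    V (jb V P h).1 ≤ (jb V P h).2.castSucc := by
  show (V P).val ≤ (V P).val
  exact Nat.le_refl _

def je (V : (P : Fin q) → Fin (m P + 1)) (P : Fin q) (h : (V P).val < m P) : J V :=
  ⟨jb V P h, jb_good V P h⟩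

lemma mem_nxt_iff (V : (P : Fin q) → Fin (m P + 1)) (P : Fin q) (h : (V P).val < m P)
    (y : Σ P : Fin q, Fin (m P)) :
    (nxt V P h) y.1 ≤ y.2.castSucc ↔ (V y.1 ≤ y.2.castSucc ∧ y ≠ jb V P h) := by
  obtain ⟨Q, a⟩ := y
  by_cases hQ : Q = P
  · subst hQ
    simp only [nxt, Function.update_self, jb, Fin.le_def, Fin.coe_castSucc,
      Sigma.mk.inj_iff, heq_eq_eq, Fin.ext_iff, ne_eq, not_and, true_and]
    constructor
    · intro h1; exact ⟨by omega, by omega⟩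
    · intro ⟨h1, h2⟩; omega
  · simp [nxt, Function.update_of_ne hQ, jb, Sigma.mk.inj_iff, hQ]

lemma card_nxt (V : (P : Fin q) → Fin (m P + 1)) (P : Fin q) (h : (V P).val < m P) :
    Fintype.card (J V) = Fintype.card (J (nxt V P h)) + 1 := by
  classical
  rw [Fintype.card_subtype, Fintype.card_subtype]
  have hset : (Finset.univ.filter fun y : Σ P : Fin q, Fin (m P) => V y.1 ≤ y.2.castSucc)
      = insert (jb V P h)
          (Finset.univ.filter fun y : Σ P : Fin q, Fin (m P) => (nxt V P h) y.1 ≤ y.2.castSucc) := by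
    ext y
    simp only [Finset.mem_filter, Finset.mem_univ, true_and, Finset.mem_insert, mem_nxt_iff]
    constructor
    · intro hy
      by_cases hyj : y = jb V P h
      · exact Or.inl hyj
      · exact Or.inr ⟨hy, hyj⟩
    · rintro (rfl | ⟨hy, _⟩)
      · exact jb_good V P h
      · exact hy
  rw [hset, Finset.card_insert_of_notMem]
  simp [mem_nxt_iff]

def incl (V : (P : Fin q) → Fin (m P + 1)) (P : Fin q) (h : (V P).val < m P)
    (a : J (nxt V P h)) : J V := ⟨a.1, ((mem_nxt_iff V P h a.1).mp a.2).1⟩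

lemma incl_ne (V : (P : Fin q) → Fin (m P + 1)) (P : Fin q) (h : (V P).val < m P)
    (a : J (nxt V P h)) : incl V P h a ≠ je V P h := by
  intro hc
  exact ((mem_nxt_iff V P h a.1).mp a.2).2 (congrArg Subtype.val hc)

lemma incl_inj (V : (P : Fin q) → Fin (m P + 1)) (P : Fin q) (h : (V P).val < m P) :
    Function.Injective (incl V P h) := by
  intro a b hab
  exact Subtype.ext (congrArg Subtype.val hab : (incl V P h a).1 = (incl V P h b).1)


def rstr (V : (P : Fin q) → Fin (m P + 1)) (P : Fin q) (h : (V P).val < m P)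
    (a : J V) (ha : a.1 ≠ jb V P h) : J (nxt V P h) :=
  ⟨a.1, (mem_nxt_iff V P h a.1).mpr ⟨a.2, ha⟩⟩

@[simp] lemma incl_rstr (V : (P : Fin q) → Fin (m P + 1)) (P : Fin q) (h : (V P).val < m P)
    (a : J V) (ha : a.1 ≠ jb V P h) : incl V P h (rstr V P h a ha) = a := Subtype.ext rfl

@[simp] lemma rstr_incl (V : (P : Fin q) → Fin (m P + 1)) (P : Fin q) (h : (V P).val < m P)
    (a : J (nxt V P h)) (ha : (incl V P h a).1 ≠ jb V P h) :
    rstr V P h (incl V P h a) ha = a := Subtype.ext rfl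

lemma ne_je_of_ne (V : (P : Fin q) → Fin (m P + 1)) (P : Fin q) (h : (V P).val < m P)
    (b : J V) (hb : b ≠ je V P h) : b.1 ≠ jb V P h :=
  fun hc => hb (Subtype.ext hc)

set_option maxHeartbeats 1000000 in
lemma core (V : (P : Fin q) → Fin (m P + 1)) (P : Fin q) (h : (V P).val < m P) (t : ℕ)
    (g : J V → Fin (Fintype.card (J V)))
    (hbij : Function.Bijective g)
    (hmono : ∀ a b : J V, a.1.1 = b.1.1 → a.1.2.val ≤ b.1.2.val → g a ≤ g b)
    (h0 : (g (je V P h)).val = 0) :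
    ∃ g' : J (nxt V P h) → Fin (Fintype.card (J (nxt V P h))),
      Function.Bijective g' ∧
      (∀ a b : J (nxt V P h), a.1.1 = b.1.1 → a.1.2.val ≤ b.1.2.val → g' a ≤ g' b) ∧
      cost p w d V g t
        = (if d (jb V P h) < t + p (jb V P h) then w (jb V P h) else 0)
          + cost p w d (nxt V P h) g' (t + p (jb V P h)) ∧
      (∀ a, (g' a).val = (g (incl V P h a)).val - 1) := by
  classical
  have hcard := card_nxt V P h
  have hne0 : ∀ b : J V, b ≠ je V P h → (g b).val ≠ 0 := by
    intro b hb hc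
    exact hb (hbij.1 (Fin.ext (hc.trans h0.symm)))
  have hne0' : ∀ a : J (nxt V P h), (g (incl V P h a)).val ≠ 0 :=
    fun a => hne0 _ (incl_ne V P h a)
  refine ⟨fun a => ⟨(g (incl V P h a)).val - 1, by
      have h1 := (g (incl V P h a)).isLt
      have h2 := hne0' a
      omega⟩, ?_, ?_, ?_, fun a => rfl⟩
  · rw [Fintype.bijective_iff_injective_and_card]
    constructor
    · intro a b hab
      have h1 := congrArg Fin.val hab
      simp only at h1
      have h2 := hne0' a
      have h3 := hne0' b
      exact incl_inj V P h (hbij.1 (Fin.ext (by omega)))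
    · simp
  · intro a b h1 h2
    have := hmono (incl V P h a) (incl V P h b) h1 h2
    rw [Fin.le_def] at this ⊢
    simp only
    omega
  · -- cost equation
    have hgjle : ∀ a : J V, g (je V P h) ≤ g a := by
      intro a; rw [Fin.le_def, h0]; exact Nat.zero_le _
    simp only [cost, Fin.mk_le_mk]
    -- inner sums
    have inner : ∀ a : J (nxt V P h),
        (∑ b ∈ Finset.univ.filter (fun b : J V => g b ≤ g (incl V P h a)), p b.1)
        = p (jb V P h)
          + ∑ b ∈ Finset.univ.filter
              (fun b : J (nxt V P h) =>
                (g (incl V P h b)).val - 1 ≤ (g (incl V P h a)).val - 1), p b.1 := by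
      intro a
      have hjmem : je V P h ∈ Finset.univ.filter (fun b : J V => g b ≤ g (incl V P h a)) := by
        simp [hgjle]
      rw [← Finset.add_sum_erase _ _ hjmem]
      congr 1
      refine Finset.sum_bij'
        (fun b hb => rstr V P h b (ne_je_of_ne V P h b (Finset.mem_erase.mp hb).1))
        (fun b' _ => incl V P h b') ?_ ?_ ?_ ?_ ?_
      · intro b hb
        simp only [Finset.mem_erase, Finset.mem_filter, Finset.mem_univ, true_and] at hb ⊢
        have hb1 := hne0 b hb.1
        have hb2 : (g b).val ≤ (g (incl V P h a)).val := hb.2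
        simp only [incl_rstr]
        omega
      · intro b' hb'
        simp only [Finset.mem_filter, Finset.mem_univ, true_and] at hb'
        simp only [Finset.mem_erase, Finset.mem_filter, Finset.mem_univ, true_and]
        refine ⟨incl_ne V P h b', ?_⟩
        rw [Fin.le_def]
        have h2 := hne0' b'
        have h3 := hne0' a
        omega
      · intro b hb
        simp
      · intro b' hb'
        simp
      · intro b hb
        rfl
    -- the first job's completion
    have hSje : (∑ b ∈ Finset.univ.filter (fun b : J V => g b ≤ g (je V P h)), p b.1)
        = p (jb V P h) := by
      have : (Finset.univ.filter (fun b : J V => g b ≤ g (je V P h))) = {je V P h} := by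
        ext b
        simp only [Finset.mem_filter, Finset.mem_univ, true_and, Finset.mem_singleton]
        constructor
        · intro hb
          rw [Fin.le_def, h0, Nat.le_zero] at hb
          exact hbij.1 (Fin.ext (hb.trans h0.symm))
        · rintro rfl; exact le_refl _
      rw [this, Finset.sum_singleton]
      rfl
    -- outer sums
    rw [Finset.sum_filter, ← Finset.add_sum_erase _ _ (Finset.mem_univ (je V P h))]
    congr 1
    · rw [hSje]
      rfl
    · rw [Finset.sum_filter]
      refine Finset.sum_bij'
        (fun a ha => rstr V P h a (ne_je_of_ne V P h a (Finset.mem_erase.mp ha).1))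
        (fun a' _ => incl V P h a') ?_ ?_ ?_ ?_ ?_
      · intro a ha; exact Finset.mem_univ _
      · intro a' ha'
        simp only [Finset.mem_erase, Finset.mem_univ, and_true]
        exact incl_ne V P h a'
      · intro a ha; simp
      · intro a' ha'; simp
      · intro a ha
        have key := inner (rstr V P h a (ne_je_of_ne V P h a (Finset.mem_erase.mp ha).1))
        simp only [incl_rstr] at key
        rw [key, ← Nat.add_assoc]
        simp only [incl_rstr]
        rfl

lemma prepend (V : (P : Fin q) → Fin (m P + 1)) (P : Fin q) (h : (V P).val < m P) (t : ℕ)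
    (σ' : J (nxt V P h) ≃ Fin (Fintype.card (J (nxt V P h))))
    (hm' : ∀ a b : J (nxt V P h), a.1.1 = b.1.1 → a.1.2.val ≤ b.1.2.val → σ' a ≤ σ' b) :
    (if d (jb V P h) < t + p (jb V P h) then w (jb V P h) else 0)
      + cost p w d (nxt V P h) (⇑σ') (t + p (jb V P h)) ∈ Costs p w d V t := by
  classical
  have hcard := card_nxt V P h
  set g : J V → Fin (Fintype.card (J V)) := fun a =>
    if ha : a.1 = jb V P h then ⟨0, by omega⟩
    else ⟨(σ' (rstr V P h a ha)).val + 1, by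
      have := (σ' (rstr V P h a ha)).isLt; omega⟩ with hgdef
  have hgval : ∀ (a : J V) (ha : a.1 ≠ jb V P h),
      (g a).val = (σ' (rstr V P h a ha)).val + 1 := by
    intro a ha
    simp only [hgdef, dif_neg ha]
  have hgval0 : (g (je V P h)).val = 0 := by
    have hc : (je V P h).1 = jb V P h := rfl
    simp only [hgdef]
    rw [dif_pos hc]
  have hginj : Function.Injective g := by
    intro a b hab
    by_cases ha : a.1 = jb V P h <;> by_cases hb : b.1 = jb V P h
    · exact Subtype.ext (ha.trans hb.symm)
    · exfalso
      have h1 := congrArg Fin.val hab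
      rw [hgval b hb] at h1
      have h2 : (g a).val = 0 := by simp only [hgdef]; rw [dif_pos ha]
      omega
    · exfalso
      have h1 := congrArg Fin.val hab
      rw [hgval a ha] at h1
      have h2 : (g b).val = 0 := by simp only [hgdef]; rw [dif_pos hb]
      omega
    · have h1 := congrArg Fin.val hab
      rw [hgval a ha, hgval b hb] at h1
      have h2 := σ'.injective (Fin.ext (by omega : ((σ' (rstr V P h a ha)) : Fin _).val
        = ((σ' (rstr V P h b hb)) : Fin _).val))
      exact Subtype.ext (congrArg Subtype.val h2 :
        (rstr V P h a ha).1 = (rstr V P h b hb).1)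
  have hgbij : Function.Bijective g := by
    rw [Fintype.bijective_iff_injective_and_card]
    exact ⟨hginj, by simp⟩
  have hgmono : ∀ a b : J V, a.1.1 = b.1.1 → a.1.2.val ≤ b.1.2.val → g a ≤ g b := by
    intro a b h1 h2
    rw [Fin.le_def]
    by_cases ha : a.1 = jb V P h
    · have h3 : (g a).val = 0 := by simp only [hgdef]; rw [dif_pos ha]
      omega
    · by_cases hb : b.1 = jb V P h
      · exfalso
        apply ha
        obtain ⟨⟨Q, x⟩, hgood⟩ := a
        have hQP : Q = P := h1.trans (congrArg Sigma.fst hb)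
        subst hQP
        have hbv : b.1.2.val = (V Q).val :=
          congrArg (fun y : Σ R : Fin q, Fin (m R) => y.2.val) hb
        have hgd : (V Q).val ≤ x.val := by
          have h4 := (Fin.le_def).mp hgood
          simpa using h4
        have h2' : x.val ≤ b.1.2.val := by simpa using h2
        have hx : x.val = (V Q).val := by omega
        exact congrArg (Sigma.mk Q) (Fin.ext hx)
      · rw [hgval a ha, hgval b hb]
        have h3 := hm' (rstr V P h a ha) (rstr V P h b hb) h1 h2
        rw [Fin.le_def] at h3
        omega
  obtain ⟨g', hbij', hmono', hcosteq, hval⟩ := core V P h t g hgbij hgmono hgval0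
  have hg'σ' : g' = ⇑σ' := by
    funext a
    apply Fin.ext
    rw [hval a]
    have h1 : (incl V P h a).1 ≠ jb V P h := ((mem_nxt_iff V P h a.1).mp a.2).2
    rw [hgval (incl V P h a) h1, rstr_incl]
    omega
  rw [hg'σ'] at hcosteq
  exact ⟨Equiv.ofBijective g hgbij, hgmono, hcosteq.symm ▸ rfl⟩

lemma decompose (V : (P : Fin q) → Fin (m P + 1)) (t c : ℕ)
    (hc : c ∈ Costs p w d V t) (hex : ∃ P, (V P).val < m P) :
    ∃ (P : Fin q) (h : (V P).val < m P) (c' : ℕ),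
      c' ∈ Costs p w d (nxt V P h) (t + p (jb V P h)) ∧
      c = (if d (jb V P h) < t + p (jb V P h) then w (jb V P h) else 0) + c' := by
  obtain ⟨σ, hm, hceq⟩ := hc
  obtain ⟨P₀, h₀⟩ := hex
  have hpos : 0 < Fintype.card (J V) := Fintype.card_pos_iff.mpr ⟨je V P₀ h₀⟩
  set a₀ := σ.symm ⟨0, hpos⟩ with ha₀
  have hP : (V a₀.1.1).val < m a₀.1.1 := by
    have h1 := (Fin.le_def).mp a₀.2
    have h2 := a₀.1.2.isLt
    simp only [Fin.coe_castSucc] at h1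
    omega
  refine ⟨a₀.1.1, hP, ?_⟩
  have hle : σ (je V a₀.1.1 hP) ≤ σ a₀ := by
    apply hm
    · rfl
    · have h1 : (V a₀.1.1).val ≤ a₀.1.2.val := by
        have h2 := (Fin.le_def).mp a₀.2
        simpa using h2
      exact h1
  have hsa : σ a₀ = ⟨0, hpos⟩ := σ.apply_symm_apply _
  have h0 : (σ (je V a₀.1.1 hP)).val = 0 := by
    rw [hsa, Fin.le_def] at hle
    have hz : ((⟨0, hpos⟩ : Fin (Fintype.card (J V)))).val = 0 := rfl
    omega
  obtain ⟨g', hbij', hmono', hcosteq, _⟩ := core V a₀.1.1 hP t (⇑σ) σ.bijective hm h0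
  exact ⟨_, ⟨Equiv.ofBijective g' hbij', hmono', rfl⟩, hceq.trans hcosteq⟩

lemma costs_empty (V : (P : Fin q) → Fin (m P + 1)) (t : ℕ)
    (hfull : ¬ ∃ P, (V P).val < m P) :
    Costs p w d V t = {0} := by
  have hemp : IsEmpty (J V) := ⟨fun y => hfull ⟨y.1.1, by
      have h1 := (Fin.le_def).mp y.2
      have h2 := y.1.2.isLt
      simp only [Fin.coe_castSucc] at h1
      omega⟩⟩
  have hc0 : Fintype.card (J V) = 0 := Fintype.card_eq_zero
  ext c
  simp only [Set.mem_singleton_iff]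
  constructor
  · rintro ⟨σ, hm, rfl⟩
    simp [cost, Finset.univ_eq_empty]
  · rintro rfl
    haveI : IsEmpty (Fin (Fintype.card (J V))) := by rw [hc0]; infer_instance
    refine ⟨Equiv.equivOfIsEmpty _ _, fun a => isEmptyElim a, ?_⟩
    simp [cost, Finset.univ_eq_empty]

lemma costs_nonempty : ∀ (n : ℕ) (V : (P : Fin q) → Fin (m P + 1)) (t : ℕ),
    Fintype.card (J V) ≤ n → (Costs p w d V t).Nonempty := by
  intro n
  induction n with
  | zero =>
    intro V t hn
    by_cases hex : ∃ P, (V P).val < m P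
    · exfalso
      obtain ⟨P, h⟩ := hex
      have := Fintype.card_pos_iff.mpr ⟨je V P h⟩
      omega
    · rw [costs_empty V t hex]
      exact ⟨0, rfl⟩
  | succ n ih =>
    intro V t hn
    by_cases hex : ∃ P, (V P).val < m P
    · obtain ⟨P, h⟩ := hex
      have hcard := card_nxt V P h
      obtain ⟨c', hc'⟩ := ih (nxt V P h) (t + p (jb V P h)) (by omega)
      obtain ⟨σ', hm', rfl⟩ := hc'
      exact ⟨_, prepend V P h t σ' hm'⟩
    · rw [costs_empty V t hex]
      exact ⟨0, rfl⟩

lemma main (OPT : ((P : Fin q) → Fin (m P + 1)) → ℕ → ℕ)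
    (hbase : ∀ (V : (P : Fin q) → Fin (m P + 1)) (t : ℕ),
      (∀ P, (V P).val = m P) → OPT V t = 0)
    (hstep : ∀ (V : (P : Fin q) → Fin (m P + 1)) (t : ℕ),
      (∃ P, (V P).val < m P) →
      OPT V t = sInf {c : ℕ | ∃ (P : Fin q) (h : (V P).val < m P),
        c = (if d ⟨P, ⟨(V P).val, h⟩⟩ < t + p ⟨P, ⟨(V P).val, h⟩⟩
              then w ⟨P, ⟨(V P).val, h⟩⟩ else 0)
            + OPT (Function.update V P ⟨(V P).val + 1, Nat.succ_lt_succ h⟩)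
                (t + p ⟨P, ⟨(V P).val, h⟩⟩)}) :
    ∀ (n : ℕ) (V : (P : Fin q) → Fin (m P + 1)) (t : ℕ),
      Fintype.card (J V) ≤ n → OPT V t = sInf (Costs p w d V t) := by
  intro n
  induction n with
  | zero =>
    intro V t hn
    by_cases hex : ∃ P, (V P).val < m P
    · exfalso
      obtain ⟨P, h⟩ := hex
      have := Fintype.card_pos_iff.mpr ⟨je V P h⟩
      omega
    · rw [costs_empty V t hex, hbase V t, csInf_singleton]
      intro P
      have h1 := Nat.lt_succ_iff.mp (V P).isLt
      by_contra hne
      exact hex ⟨P, lt_of_le_of_ne h1 hne⟩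
  | succ n ih =>
    intro V t hn
    by_cases hex : ∃ P, (V P).val < m P
    · rw [hstep V t hex]
      have hIH : ∀ (P : Fin q) (h : (V P).val < m P),
          OPT (nxt V P h) (t + p (jb V P h))
            = sInf (Costs p w d (nxt V P h) (t + p (jb V P h))) := by
        intro P h
        apply ih
        have := card_nxt V P h
        omega
      apply le_antisymm
      · -- sInf recset ≤ sInf Costs
        have hCne := costs_nonempty (p := p) (w := w) (d := d) (Fintype.card (J V)) V t le_rfl
        obtain ⟨P, h, c', hc'mem, hceq⟩ := decompose V t _ (Nat.sInf_mem hCne) hex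
        have h1 : sInf {c : ℕ | ∃ (P : Fin q) (h : (V P).val < m P),
            c = (if d ⟨P, ⟨(V P).val, h⟩⟩ < t + p ⟨P, ⟨(V P).val, h⟩⟩
                  then w ⟨P, ⟨(V P).val, h⟩⟩ else 0)
                + OPT (Function.update V P ⟨(V P).val + 1, Nat.succ_lt_succ h⟩)
                    (t + p ⟨P, ⟨(V P).val, h⟩⟩)}
            ≤ (if d (jb V P h) < t + p (jb V P h) then w (jb V P h) else 0)
              + OPT (nxt V P h) (t + p (jb V P h)) := Nat.sInf_le ⟨P, h, rfl⟩
        have h2 : OPT (nxt V P h) (t + p (jb V P h)) ≤ c' := by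
          rw [hIH P h]
          exact Nat.sInf_le hc'mem
        omega
      · -- sInf Costs ≤ sInf recset
        have hS₁ : (∃ (P : Fin q) (h : (V P).val < m P),
            sInf {c : ℕ | ∃ (P : Fin q) (h : (V P).val < m P),
              c = (if d ⟨P, ⟨(V P).val, h⟩⟩ < t + p ⟨P, ⟨(V P).val, h⟩⟩
                    then w ⟨P, ⟨(V P).val, h⟩⟩ else 0)
                  + OPT (Function.update V P ⟨(V P).val + 1, Nat.succ_lt_succ h⟩)
                      (t + p ⟨P, ⟨(V P).val, h⟩⟩)}
            = (if d (jb V P h) < t + p (jb V P h) then w (jb V P h) else 0)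
              + OPT (nxt V P h) (t + p (jb V P h))) := by
          obtain ⟨P₀, h₀⟩ := hex
          exact Nat.sInf_mem (⟨_, P₀, h₀, rfl⟩ :
            Set.Nonempty {c : ℕ | ∃ (P : Fin q) (h : (V P).val < m P),
              c = (if d ⟨P, ⟨(V P).val, h⟩⟩ < t + p ⟨P, ⟨(V P).val, h⟩⟩
                    then w ⟨P, ⟨(V P).val, h⟩⟩ else 0)
                  + OPT (Function.update V P ⟨(V P).val + 1, Nat.succ_lt_succ h⟩)
                      (t + p ⟨P, ⟨(V P).val, h⟩⟩)})
        obtain ⟨P, h, heq⟩ := hS₁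
        rw [heq, hIH P h]
        have hcard := card_nxt V P h
        have hCne' := costs_nonempty (p := p) (w := w) (d := d)
          (Fintype.card (J (nxt V P h))) (nxt V P h) (t + p (jb V P h)) le_rfl
        obtain ⟨σ', hm', hcost⟩ := Nat.sInf_mem hCne'
        have hmem := prepend (p := p) (w := w) (d := d) V P h t σ' hm'
        have h3 := Nat.sInf_le hmem
        rw [← hcost] at h3
        exact h3
    · rw [costs_empty V t hex, hbase V t, csInf_singleton]
      intro P
      have h1 := Nat.lt_succ_iff.mp (V P).isLt
      by_contra hne
      exact hex ⟨P, lt_of_le_of_ne h1 hne⟩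

end S17

/-- **correctness of the dynamic program.** Consider a pDLS instance
with chains `P ∈ Fin q`, chain `P` having jobs `Fin (m P)` ordered by `⪯` = `≤`, with
processing times `p`, penalties `w` and deadlines `d`.  A vector `V` of suffixes, one
per chain, is encoded by starting points `V P : Fin (m P + 1)` (the suffix of chain `P`
being `{a : V P ≤ a.castSucc}`, empty when `V P` is the last element); its `⪯`-least
job is the job with index `(V P).val` when `(V P).val < m P`.  Suppose
`OPT : (vectors of suffixes) → ℕ → ℕ` satisfies the recurrence
`OPT(V,t) = 0` if all `V^P` are empty, and otherwise
`OPT(V,t) = min_{P : V^P ≠ ∅} [ cost(j,t) + OPT(V ∖ j, t + p_j) ]` where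
`j = min(V^P)` and `cost(j,t) = w_j` if `d_j < t + p_j`, else `0`.
Then for every `V` and `t`, `OPT(V,t)` equals the minimum total penalty achievable by
executing the jobs of `⋃_P V^P` consecutively starting at time `t` in an order
respecting each chain's order (job `a` completing at `t + ∑_{b : σ b ≤ σ a} p_b` and
incurring penalty `w_a` iff this exceeds `d_a`).  In particular, `OPT` at the vector of
full chains and `t = 0` is the minimum total penalty of a feasible schedule. -/
theorem stmt17 (q : ℕ) (m : Fin q → ℕ)
    (p w d : (Σ P : Fin q, Fin (m P)) → ℕ)
    (OPT : ((P : Fin q) → Fin (m P + 1)) → ℕ → ℕ)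
    (hbase : ∀ (V : (P : Fin q) → Fin (m P + 1)) (t : ℕ),
      (∀ P, (V P).val = m P) → OPT V t = 0)
    (hstep : ∀ (V : (P : Fin q) → Fin (m P + 1)) (t : ℕ),
      (∃ P, (V P).val < m P) →
      OPT V t = sInf {c : ℕ | ∃ (P : Fin q) (h : (V P).val < m P),
        c = (if d ⟨P, ⟨(V P).val, h⟩⟩ < t + p ⟨P, ⟨(V P).val, h⟩⟩
              then w ⟨P, ⟨(V P).val, h⟩⟩ else 0)
            + OPT (Function.update V P ⟨(V P).val + 1, Nat.succ_lt_succ h⟩)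
                (t + p ⟨P, ⟨(V P).val, h⟩⟩)}) :
    ∀ (V : (P : Fin q) → Fin (m P + 1)) (t : ℕ),
      OPT V t = sInf {c : ℕ |
        ∃ σ : {y : Σ P : Fin q, Fin (m P) // V y.1 ≤ y.2.castSucc} ≃
              Fin (Fintype.card {y : Σ P : Fin q, Fin (m P) // V y.1 ≤ y.2.castSucc}),
          (∀ a b : {y : Σ P : Fin q, Fin (m P) // V y.1 ≤ y.2.castSucc},
            a.1.1 = b.1.1 → a.1.2.val ≤ b.1.2.val → σ a ≤ σ b) ∧
          c = ∑ a ∈ Finset.univ.filter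
                (fun a : {y : Σ P : Fin q, Fin (m P) // V y.1 ≤ y.2.castSucc} =>
                  d a.1 < t + ∑ b ∈ Finset.univ.filter
                    (fun b : {y : Σ P : Fin q, Fin (m P) // V y.1 ≤ y.2.castSucc} =>
                      σ b ≤ σ a), p b.1),
              w a.1} := by
  intro V t
  exact S17.main (p := p) (w := w) (d := d) OPT hbase hstep
    (Fintype.card (S17.J V)) V t le_rfl
end
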